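/- arXiv:1902.00968 — 12 statements merged into one kernel-verified Lean document; each statement's English description precedes it below -/
import Mathlib

section
/- For y ∈ 2^ω let X_y = {s ∈ 2^{<ω} : |s| ≥ 1, s is not a prefix of y, but the string obtained from s by deleting its last bit is a prefix of y}. Then the map y ↦ X_y is injective, each X_y is a ⪯-antichain (hence X_y ∈ I_wf), and the set P = {X_y : y ∈ 2^ω} is strongly unbounded in (I_wf, ⊆): every infinite subset of P has no upper bound in I_wf. In particular, I_wf contains a strongly unbounded subset of cardinality 2^ℵ₀. -/
/-!
A member of `X_y` is a one-bit deviation from `y`, so of two `⪯`-comparable members the shorter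
one would be a prefix of `y`; hence `X_y` is an antichain, and an antichain contains at most one
initial segment of any branch. For an infinite `Y ⊆ 2^ω`, compactness of `2^ω` gives an
accumulation point `z` of `Y`. Every `y ∈ Y` with `y ≠ z` first differs from `z` at some level
`m`, and then `z ↾ (m + 1) ∈ X_y`; since these levels are unbounded, any common upper bound of the
`X_y` contains infinitely many initial segments of `z`.
-/

open PiNat Filter Topology

/-- The length-`n` initial segment of an infinite binary sequence, as a binary string. -/
def initSeg (y : ℕ → Bool) (n : ℕ) : List Bool := List.ofFn (fun i : Fin n => y i)

/-- `[X]`: the set of infinite branches hitting `X` infinitely often. -/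
def branches (X : Set (List Bool)) : Set (ℕ → Bool) :=
  {y | ∀ N : ℕ, ∃ n ≥ N, initSeg y n ∈ X}

/-- The ideal of well-founded sets of binary strings: `X` with `[X] = ∅`. -/
def Iwf : Set (Set (List Bool)) := {X | branches X = ∅}

/-- `X_y`: strings that are not prefixes of `y` but whose truncation by one bit is. -/
def Xy (y : ℕ → Bool) : Set (List Bool) :=
  {s | 1 ≤ s.length ∧ s ≠ initSeg y s.length ∧ s.dropLast = initSeg y (s.length - 1)}

section InitSeg

variable (y z : ℕ → Bool)

@[simp]
lemma initSeg_length (n : ℕ) : (initSeg y n).length = n := List.length_ofFn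

lemma initSeg_succ (n : ℕ) : initSeg y (n + 1) = initSeg y n ++ [y n] :=
  List.ofFn_succ_last

variable {y z}

lemma initSeg_eq_initSeg_iff {n : ℕ} : initSeg y n = initSeg z n ↔ ∀ i < n, y i = z i := by
  simp only [initSeg, List.ofFn_inj, funext_iff, Fin.forall_iff]

lemma initSeg_prefix_initSeg {n m : ℕ} (h : n ≤ m) : initSeg y n <+: initSeg y m := by
  induction m, h using Nat.le_induction with
  | base => exact List.prefix_refl _
  | succ m _ ih => exact ih.trans (initSeg_succ y m ▸ List.prefix_append _ _)

lemma eq_initSeg_of_prefix_initSeg {s : List Bool} {n : ℕ} (h : s <+: initSeg y n) :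
    s = initSeg y s.length := by
  have hle : s.length ≤ n := by simpa using h.length_le
  exact (List.prefix_of_prefix_length_le h (initSeg_prefix_initSeg hle) (by simp)).eq_of_length
    (by simp)

end InitSeg

section Xy

variable {y z : ℕ → Bool}

lemma initSeg_notMem_Xy (n : ℕ) : initSeg y n ∉ Xy y :=
  fun h => h.2.1 (by rw [initSeg_length])

lemma initSeg_succ_firstDiff_mem_Xy (h : y ≠ z) : initSeg z (firstDiff y z + 1) ∈ Xy y := by
  set m := firstDiff y z
  refine ⟨by simp, ?_, ?_⟩
  · rw [initSeg_length, Ne, initSeg_eq_initSeg_iff]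
    exact fun hagree => apply_firstDiff_ne h (hagree m m.lt_succ_self).symm
  · rw [initSeg_length, Nat.add_sub_cancel, initSeg_succ, List.dropLast_concat,
      initSeg_eq_initSeg_iff]
    exact fun i hi => (apply_eq_of_lt_firstDiff hi).symm

lemma eq_of_prefix_of_mem_Xy {s t : List Bool} (hs : s ∈ Xy y) (ht : t ∈ Xy y) (hst : s <+: t) :
    s = t := by
  by_contra hne
  have hlt : s.length < t.length :=
    hst.length_le.lt_of_ne fun hlen => hne (hst.eq_of_length hlen)
  have hs_prefix : s <+: t.dropLast :=
    List.prefix_of_prefix_length_le hst (List.dropLast_prefix t) (by rw [List.length_dropLast]; omega)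
  rw [ht.2.2] at hs_prefix
  exact hs.2.1 (eq_initSeg_of_prefix_initSeg hs_prefix)

lemma Xy_injective : Function.Injective Xy := by
  intro y z hyz
  by_contra hne
  have hmem := initSeg_succ_firstDiff_mem_Xy hne
  rw [hyz] at hmem
  exact initSeg_notMem_Xy _ hmem

end Xy

lemma branches_eq_empty_of_prefix_antichain {X : Set (List Bool)}
    (hX : ∀ s ∈ X, ∀ t ∈ X, s <+: t → s = t) : branches X = ∅ := by
  refine Set.eq_empty_of_forall_notMem fun z hz => ?_
  obtain ⟨n, -, hn⟩ := hz 0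
  obtain ⟨m, hm, hm'⟩ := hz (n + 1)
  have := congrArg List.length (hX _ hn _ hm' (initSeg_prefix_initSeg (by omega)))
  simp only [initSeg_length] at this
  omega

lemma mem_branches_of_accPt {Y : Set (ℕ → Bool)} {Z : Set (List Bool)} {z : ℕ → Bool}
    (hz : AccPt z (𝓟 Y)) (hZ : ∀ y ∈ Y, Xy y ⊆ Z) : z ∈ branches Z := by
  intro N
  obtain ⟨y, ⟨hyN, hyY⟩, hyz⟩ :=
    accPt_iff_nhds.mp hz _ ((isOpen_cylinder _ z N).mem_nhds (self_mem_cylinder z N))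
  exact ⟨firstDiff y z + 1, by have := (mem_cylinder_iff_le_firstDiff hyz N).mp hyN; omega,
    hZ y hyY (initSeg_succ_firstDiff_mem_Xy hyz)⟩

/-- The map `y ↦ X_y` is injective, each `X_y` is a `⪯`-antichain belonging to `I_wf`,
and `{X_y : y ∈ 2^ω}` is strongly unbounded in `(I_wf, ⊆)`: every infinite subset has
no upper bound in `I_wf`.  In particular it is a strongly unbounded subset of `I_wf` of
cardinality continuum. -/
theorem Xy_strongly_unbounded :
    Function.Injective Xy ∧
    (∀ y : ℕ → Bool, (∀ s ∈ Xy y, ∀ t ∈ Xy y, s <+: t → s = t) ∧ Xy y ∈ Iwf) ∧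
    (∀ S : Set (Set (List Bool)), S ⊆ Set.range Xy → S.Infinite →
      ¬ ∃ Z ∈ Iwf, ∀ X ∈ S, X ⊆ Z) ∧
    Cardinal.mk (Set.range Xy) = Cardinal.continuum := by
  refine ⟨Xy_injective, fun y => ⟨fun s hs t ht => eq_of_prefix_of_mem_Xy hs ht,
    branches_eq_empty_of_prefix_antichain fun s hs t ht => eq_of_prefix_of_mem_Xy hs ht⟩, ?_, ?_⟩
  · rintro S hS hSinf ⟨Z, hZ, hSZ⟩
    have hY : (Xy ⁻¹' S).Infinite :=
      Set.Infinite.of_image Xy (by rwa [Set.image_preimage_eq_of_subset hS])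
    obtain ⟨z, hz⟩ := hY.exists_accPt_principal
    have hzZ : z ∈ branches Z := mem_branches_of_accPt hz fun y hy => hSZ _ hy
    exact (Set.eq_empty_iff_forall_notMem.mp hZ) z hzZ
  · rw [Cardinal.mk_range_eq Xy Xy_injective]
    simp [Cardinal.two_power_aleph0]
end

section
/- If a partial order P of cardinality 2^ℵ₀ has maximal Tukey type, then P contains an uncountable strongly unbounded subset. -/
/-- A subset of a preorder is unbounded if it has no upper bound. -/
def Unbounded {P : Type*} [Preorder P] (S : Set P) : Prop := ¬ ∃ b : P, ∀ x ∈ S, x ≤ b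

/-- A Tukey map sends unbounded sets to unbounded sets. -/
def IsTukeyMap {P Q : Type*} [Preorder P] [Preorder Q] (f : P → Q) : Prop :=
  ∀ S : Set P, Unbounded S → Unbounded (f '' S)

/-- `P` is Tukey-reducible to `Q`. -/
def TukeyLE (P Q : Type*) [Preorder P] [Preorder Q] : Prop :=
  ∃ f : P → Q, IsTukeyMap f

/-- An infinite set of singletons in `Finset ℝ` is unbounded. -/
lemma singletons_unbounded {A : Set ℝ} (hA : A.Infinite) :
    Unbounded ((fun r => ({r} : Finset ℝ)) '' A) := by
  rintro ⟨b, hb⟩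
  have hsub : A ⊆ ↑b := by
    intro r hr
    have := hb {r} ⟨r, hr, rfl⟩
    simpa using this
  exact hA (b.finite_toSet.subset hsub)

/-- If a partial order of cardinality continuum has maximal Tukey type, then it
contains an uncountable strongly unbounded subset. -/
theorem maximal_Tukey_type_strongly_unbounded (P : Type) [PartialOrder P]
    (hcard : Cardinal.mk P = Cardinal.continuum)
    (hmax : ∀ (Q : Type) [PartialOrder Q],
      Cardinal.mk Q ≤ Cardinal.continuum → TukeyLE Q P) :
    ∃ X : Set P, ¬ X.Countable ∧ ∀ Y ⊆ X, Y.Infinite → Unbounded Y := by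
  obtain ⟨f, hf⟩ := hmax (Finset ℝ)
    (by rw [Cardinal.mk_finset_of_infinite, Cardinal.mk_real])
  set g : ℝ → P := fun r => f {r} with hg
  -- fibers of g are finite
  have hfib : ∀ p : P, (g ⁻¹' {p}).Finite := by
    intro p
    rw [← Set.not_infinite]
    intro hinf
    have hub := hf _ (singletons_unbounded hinf)
    apply hub
    refine ⟨p, ?_⟩
    rintro x ⟨s, ⟨r, hr, rfl⟩, rfl⟩
    exact le_of_eq hr
  refine ⟨Set.range g, ?_, ?_⟩
  · intro hc
    have huniv : (Set.univ : Set ℝ) ⊆ ⋃ p ∈ Set.range g, g ⁻¹' {p} := by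
      intro r _
      exact Set.mem_biUnion ⟨r, rfl⟩ rfl
    have : (Set.univ : Set ℝ).Countable :=
      Set.Countable.mono huniv (Set.Countable.biUnion hc fun p _ => (hfib p).countable)
    exact Cardinal.not_countable_real this
  · intro Y hY hYinf
    set A : Set ℝ := {r | g r ∈ Y} with hA
    have himg : g '' A = Y := by
      apply Set.Subset.antisymm
      · rintro _ ⟨r, hr, rfl⟩; exact hr
      · intro y hy
        obtain ⟨r, rfl⟩ := hY hy
        exact ⟨r, hy, rfl⟩
    have hAinf : A.Infinite := by
      intro hfin
      exact hYinf (himg ▸ hfin.image g)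
    have hub := hf _ (singletons_unbounded hAinf)
    have : f '' ((fun r => ({r} : Finset ℝ)) '' A) = Y := by
      rw [Set.image_image, himg]
    rwa [this] at hub
end

section
/- The ideal ℓ₁ contains no uncountable strongly unbounded subset: for every uncountable X ⊆ ℓ₁ there are distinct elements y₁, y₂, y₃, … of X whose union ⋃_{k} y_k belongs to ℓ₁. -/
/-- The summable ideal `ℓ₁ = {X ⊆ ℕ : ∑_{n ∈ X} 1/(n+1) < ∞}`. -/
def ell1 : Set (Set ℕ) := {X | Summable (fun n : X => (1 : ℝ) / ((n : ℕ) + 1))}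

open ENNReal NNReal

noncomputable def ell1Aux.wf (n : ℕ) : ℝ≥0 := ((n : ℝ≥0) + 1)⁻¹
noncomputable def ell1Aux.g (S : Set ℕ) : ℝ≥0∞ := ∑' n : S, (ell1Aux.wf n : ℝ≥0∞)

namespace ell1Aux

lemma gm {S T : Set ℕ} (h : S ⊆ T) : g S ≤ g T := by
  rw [g, g]; exact ENNReal.tsum_mono_subtype (fun n => (wf n : ℝ≥0∞)) h

lemma mem_ell1_iff {S : Set ℕ} : S ∈ ell1 ↔ g S ≠ ⊤ := by
  have h1 : g S ≠ ⊤ ↔ Summable (fun n : S => wf n) :=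
    ENNReal.tsum_coe_ne_top_iff_summable
  rw [h1]
  have h2 : (fun n : S => (1 : ℝ) / ((n : ℕ) + 1)) = fun n : S => ((wf n : ℝ≥0) : ℝ) := by
    funext n
    simp [wf]
  constructor
  · intro h; exact NNReal.summable_coe.mp (by rw [← h2]; exact h)
  · intro h; rw [show (S ∈ ell1) = Summable (fun n : S => (1 : ℝ) / ((n : ℕ) + 1)) from rfl, h2]
    exact NNReal.summable_coe.mpr h

lemma tail_small {S : Set ℕ} (hS : g S ≠ ⊤) {ε : ℝ≥0∞} (hε : 0 < ε) :
    ∃ F : Finset ℕ, ↑F ⊆ S ∧ g (S \ ↑F) < ε := by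
  classical
  set f : ℕ → ℝ≥0∞ := Set.indicator S (fun n => (wf n : ℝ≥0∞)) with hf
  have hsum : ∑' n, f n ≠ ⊤ := by
    rw [hf, ← tsum_subtype]; exact hS
  have htend := ENNReal.tendsto_tsum_compl_atTop_zero hsum
  obtain ⟨t, ht⟩ := ((tendsto_order.1 htend).2 ε hε).exists
  have hfin : (S ∩ ↑t).Finite := t.finite_toSet.inter_of_right _
  refine ⟨hfin.toFinset, by simp [Set.inter_subset_left], ?_⟩
  have h1 : S \ ↑hfin.toFinset = S \ ↑t := by
    ext n; simp [Set.Finite.mem_toFinset]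
  rw [h1, g]
  refine lt_of_le_of_lt ?_ ht
  calc (∑' n : (S \ ↑t : Set ℕ), (wf n : ℝ≥0∞)) = ∑' n : (S \ ↑t : Set ℕ), f n := by
        refine tsum_congr fun n => ?_
        rw [hf, Set.indicator_of_mem n.2.1]
      _ ≤ ∑' n : (((↑t : Set ℕ)ᶜ : Set ℕ)), f n :=
        ENNReal.tsum_mono_subtype _ (fun n hn => hn.2)
      _ = ∑' b : { x // x ∉ t }, f b := by
        apply tsum_congr_set_coe
        rfl
      _ ≤ _ := le_rfl

lemma ell1_step {Y : Set (Set ℕ)} (hY : Y ⊆ ell1) (hunc : ¬ Y.Countable) {ε : ℝ≥0∞} (hε : 0 < ε) :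
    ∃ F : Finset ℕ, ¬ {B ∈ Y | ↑F ⊆ B ∧ g (B \ ↑F) < ε}.Countable := by
  by_contra h
  push_neg at h
  have hcov : Y ⊆ ⋃ F : Finset ℕ, {B ∈ Y | ↑F ⊆ B ∧ g (B \ ↑F) < ε} := by
    intro B hB
    have hgB : g B ≠ ⊤ := by
      have := hY hB
      rw [ell1, Set.mem_setOf_eq] at this
      have h2 : (fun n : B => (1 : ℝ) / ((n : ℕ) + 1)) = fun n : B => ((wf n : ℝ≥0) : ℝ) := by
        funext n; simp [wf]
      rw [h2] at this
      exact ENNReal.tsum_coe_ne_top_iff_summable.mpr (NNReal.summable_coe.mp this)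
    obtain ⟨F, h1, h2⟩ := tail_small hgB hε
    exact Set.mem_iUnion.2 ⟨F, hB, h1, h2⟩
  exact hunc ((Set.countable_iUnion fun F => h F).mono hcov)

end ell1Aux

/-- `ℓ₁` contains no uncountable strongly unbounded subset: every uncountable
`X ⊆ ℓ₁` contains a sequence of distinct elements whose union is still in `ℓ₁`. -/
theorem ell1_no_uncountable_strongly_unbounded (X : Set (Set ℕ))
    (hX : X ⊆ ell1) (hunc : ¬ X.Countable) :
    ∃ y : ℕ → Set ℕ, Function.Injective y ∧ (∀ k, y k ∈ X) ∧ (⋃ k, y k) ∈ ell1 := by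
  classical
  have hpow : ∀ k : ℕ, (0 : ℝ≥0∞) < 2⁻¹ ^ k := fun k => by
    apply ENNReal.pow_pos; simp
  -- the refinement step, packaged
  have next : ∀ (k : ℕ) (q : {p : Set (Set ℕ) × Finset ℕ // p.1 ⊆ X ∧ ¬ p.1.Countable}),
      ∃ q' : {p : Set (Set ℕ) × Finset ℕ // p.1 ⊆ X ∧ ¬ p.1.Countable},
        q'.1.1 ⊆ q.1.1 ∧ ∀ B ∈ q'.1.1, ↑q'.1.2 ⊆ B ∧ ell1Aux.g (B \ ↑q'.1.2) < 2⁻¹ ^ k := by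
    intro k q
    obtain ⟨F, hF⟩ := ell1Aux.ell1_step (q.2.1.trans hX) q.2.2 (hpow k)
    refine ⟨⟨({B ∈ q.1.1 | ↑F ⊆ B ∧ ell1Aux.g (B \ ↑F) < 2⁻¹ ^ k}, F),
      (Set.sep_subset _ _).trans q.2.1, hF⟩, Set.sep_subset _ _, fun B hB => hB.2⟩
  choose nxt hsub hprop using next
  set seq : ℕ → {p : Set (Set ℕ) × Finset ℕ // p.1 ⊆ X ∧ ¬ p.1.Countable} :=
    fun k => Nat.rec ⟨(X, ∅), subset_rfl, hunc⟩ (fun k q => nxt k q) k with hseq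
  set Y : ℕ → Set (Set ℕ) := fun k => (seq k).1.1 with hY
  set F : ℕ → Finset ℕ := fun k => (seq k).1.2 with hF
  have hseqsucc : ∀ k, seq (k + 1) = nxt k (seq k) := fun k => rfl
  have hYsub : ∀ k, Y (k + 1) ⊆ Y k := fun k => hsub k (seq k)
  have hYprop : ∀ k, ∀ B ∈ Y (k + 1), ↑(F (k + 1)) ⊆ B ∧ ell1Aux.g (B \ ↑(F (k + 1))) < 2⁻¹ ^ k :=
    fun k => hprop k (seq k)
  have hYX : ∀ k, Y k ⊆ X := fun k => (seq k).2.1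
  have hYunc : ∀ k, ¬ (Y k).Countable := fun k => (seq k).2.2
  -- pick distinct elements
  have pick : ∀ (k : ℕ) (s : Finset (Set ℕ)), ∃ B, B ∈ Y (k + 1) ∧ B ∉ s := by
    intro k s
    by_contra h
    push_neg at h
    exact hYunc (k + 1) ((s.countable_toSet).mono h)
  choose pk hpkmem hpknot using pick
  set seq2 : ℕ → Set ℕ × Finset (Set ℕ) :=
    fun k => Nat.rec (pk 0 ∅, {pk 0 ∅})
      (fun k p => (pk (k + 1) p.2, insert (pk (k + 1) p.2) p.2)) k with hseq2
  set y : ℕ → Set ℕ := fun k => (seq2 k).1 with hy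
  have hymem : ∀ k, y k ∈ Y (k + 1) := by
    intro k
    cases k with
    | zero => exact hpkmem 0 ∅
    | succ k => exact hpkmem (k + 1) (seq2 k).2
  have hcur : ∀ k, y k ∈ (seq2 k).2 := by
    intro k
    cases k with
    | zero => exact Finset.mem_singleton_self _
    | succ k => exact Finset.mem_insert_self _ _
  have hmono2 : ∀ k, (seq2 k).2 ⊆ (seq2 (k + 1)).2 := by
    intro k
    exact Finset.subset_insert _ _
  have hle : ∀ j k, j ≤ k → (seq2 j).2 ⊆ (seq2 k).2 := by
    intro j k hjk
    induction k with
    | zero => simp_all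
    | succ k ih =>
      rcases Nat.lt_succ_iff_lt_or_eq.mp (Nat.lt_succ_of_le hjk) with h | h
      · exact (ih (Nat.lt_succ_iff.mp h)).trans (hmono2 k)
      · subst h; rfl
  have hnotprev : ∀ k, y (k + 1) ∉ (seq2 k).2 := fun k => hpknot (k + 1) (seq2 k).2
  have hyinj : Function.Injective y := by
    have key : ∀ j k, j < k → y j ≠ y k := by
      intro j k hjk
      cases k with
      | zero => omega
      | succ k =>
        intro hEq
        apply hnotprev k
        rw [← hEq]
        exact hle j k (Nat.lt_succ_iff.mp hjk) (hcur j)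
    intro j k hEq
    by_contra hne
    rcases Nat.lt_or_ge j k with h | h
    · exact key j k h hEq
    · exact key k j (lt_of_le_of_ne h (Ne.symm hne)) hEq.symm
  refine ⟨y, hyinj, fun k => hYX (k + 1) (hymem k), ?_⟩
  -- summability of the union
  rw [ell1Aux.mem_ell1_iff]
  have hchunk1 : ell1Aux.g (y 0) ≠ ⊤ := ell1Aux.mem_ell1_iff.mp (hX (hYX 1 (hymem 0)))
  have hgeo : (∑' k : ℕ, (2 : ℝ≥0∞)⁻¹ ^ k) = 2 := by
    rw [ENNReal.tsum_geometric]
    rw [show (1 : ℝ≥0∞) - 2⁻¹ = 2⁻¹ by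
      rw [ENNReal.sub_eq_of_eq_add (by simp)]
      rw [← two_mul, ENNReal.mul_inv_cancel (by norm_num) (by norm_num)]]
    simp
  have htails : ∀ k, ell1Aux.g (y k \ ↑(F (k + 1))) < 2⁻¹ ^ k := fun k => (hYprop k _ (hymem k)).2
  have hFsub : ∀ k, (↑(F (k + 1)) : Set ℕ) ⊆ y k := fun k => (hYprop k _ (hymem k)).1
  have hdiffs : ∀ k, ell1Aux.g ((↑(F (k + 2)) : Set ℕ) \ ↑(F (k + 1))) < 2⁻¹ ^ k := by
    intro k
    have h1 : (↑(F (k + 2)) : Set ℕ) ⊆ y (k + 1) := hFsub (k + 1)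
    have h2 : y (k + 1) ∈ Y (k + 1) := hYsub (k + 1) (hymem (k + 1))
    have h3 := (hYprop k _ h2).2
    refine lt_of_le_of_lt ?_ h3
    apply ell1Aux.gm
    exact fun n hn => ⟨h1 hn.1, hn.2⟩
  -- cover the union by three manageable pieces
  have hcover : (⋃ k, y k) ⊆
      (y 0 ∪ ⋃ k, ((↑(F (k + 2)) : Set ℕ) \ ↑(F (k + 1)))) ∪
        ⋃ k, (y k \ ↑(F (k + 1))) := by
    intro n hn
    obtain ⟨k, hk⟩ := Set.mem_iUnion.mp hn
    by_cases hnf : n ∈ (↑(F (k + 1)) : Set ℕ)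
    · left
      have hex : ∃ m, n ∈ (↑(F (m + 1)) : Set ℕ) := ⟨k, hnf⟩
      set m0 := Nat.find hex with hm0
      have hmem0 : n ∈ (↑(F (m0 + 1)) : Set ℕ) := Nat.find_spec hex
      cases hm : m0 with
      | zero =>
        left
        rw [hm] at hmem0
        exact hFsub 0 hmem0
      | succ j =>
        right
        apply Set.mem_iUnion.mpr
        refine ⟨j, ?_, ?_⟩
        · rw [hm] at hmem0; exact hmem0
        · exact Nat.find_min hex (by omega)
    · right
      exact Set.mem_iUnion.mpr ⟨k, hk, hnf⟩
  have hbound : ell1Aux.g (⋃ k, y k) ≤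
      (ell1Aux.g (y 0) + ∑' k, ell1Aux.g ((↑(F (k + 2)) : Set ℕ) \ ↑(F (k + 1)))) +
        ∑' k, ell1Aux.g (y k \ ↑(F (k + 1))) := by
    refine (ell1Aux.gm hcover).trans ?_
    simp only [ell1Aux.g]
    refine (ENNReal.tsum_union_le (fun n => (ell1Aux.wf n : ℝ≥0∞)) _ _).trans ?_
    gcongr
    · refine (ENNReal.tsum_union_le (fun n => (ell1Aux.wf n : ℝ≥0∞)) _ _).trans ?_
      gcongr
      exact ENNReal.tsum_iUnion_le_tsum (fun n => (ell1Aux.wf n : ℝ≥0∞)) _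
    · exact ENNReal.tsum_iUnion_le_tsum (fun n => (ell1Aux.wf n : ℝ≥0∞)) _
  intro htop
  rw [htop] at hbound
  have h1 : (∑' k, ell1Aux.g ((↑(F (k + 2)) : Set ℕ) \ ↑(F (k + 1)))) ≤ 2 := by
    rw [← hgeo]; exact ENNReal.tsum_le_tsum fun k => (hdiffs k).le
  have h2 : (∑' k, ell1Aux.g (y k \ ↑(F (k + 1)))) ≤ 2 := by
    rw [← hgeo]; exact ENNReal.tsum_le_tsum fun k => (htails k).le
  have : (⊤ : ℝ≥0∞) ≤ (ell1Aux.g (y 0) + 2) + 2 := hbound.trans (by gcongr)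
  have hne : (ell1Aux.g (y 0) + 2) + 2 ≠ ⊤ := by
    apply ENNReal.add_ne_top.mpr
    exact ⟨ENNReal.add_ne_top.mpr ⟨hchunk1, by norm_num⟩, by norm_num⟩
  exact hne (top_le_iff.mp this)
end

section
/- If I is an F_σ ideal on ℕ and (I, ⊆) is Tukey-reducible to NWD, then I is countably generated. -/
/-- An ideal of subsets: contains `∅`, closed under subsets and finite unions. -/
def IsIdeal {A : Type*} (I : Set (Set A)) : Prop :=
  ∅ ∈ I ∧ (∀ X ∈ I, ∀ Y, Y ⊆ X → Y ∈ I) ∧ (∀ X ∈ I, ∀ Y ∈ I, X ∪ Y ∈ I)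

/-- `S` is σ-bounded in `I`: a countable subfamily of `I` covers every member of `S`. -/
def SigmaBounded {A : Type*} (I S : Set (Set A)) : Prop :=
  ∃ C : Set (Set A), C.Countable ∧ C ⊆ I ∧ ∀ X ∈ S, ∃ Y ∈ C, X ⊆ Y

/-- Characteristic function, identifying `Set ℕ` with Cantor space. -/
noncomputable def chi (X : Set ℕ) : ℕ → Bool := fun n => @decide (n ∈ X) (Classical.dec _)

/-- An `F_σ` subset of Cantor space: a countable union of closed sets. -/
def IsFSigma (S : Set (ℕ → Bool)) : Prop :=
  ∃ C : ℕ → Set (ℕ → Bool), (∀ n, IsClosed (C n)) ∧ S = ⋃ n, C n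

/-- The collection of compact nowhere dense subsets of Cantor space `2^ω`. -/
def NWD : Set (Set (ℕ → Bool)) := {K | IsCompact K ∧ IsNowhereDense K}

/-! Suppose `I` is not countably generated, let `f` be a Tukey map and `chi '' I = ⋃ n, C n` with
every `C n` closed. Enumerate a countable π-base `V 0, V 1, …` of Cantor space. Recursively, at
stage `n`, shrink a reservoir of `I` that is not σ-bounded so that all images avoid some nonempty
open subset of `V n`, and pick finitely many sets from it such that, by compactness of `C n`, no set
coded in `C n` contains all sets picked so far. The picked sets form a family that is unbounded
in `I`, while their images all avoid one dense open set, whose complement is a single compact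
nowhere dense bound: this contradicts that `f` is Tukey. -/

open Set TopologicalSpace

section SigmaBounded

variable {A : Type*} {I S T : Set (Set A)}

lemma SigmaBounded.mono (h : SigmaBounded I S) (hTS : T ⊆ S) : SigmaBounded I T :=
  let ⟨C, hC, hCI, hSC⟩ := h
  ⟨C, hC, hCI, fun X hX => hSC X (hTS hX)⟩

lemma SigmaBounded.iUnion {ι : Type*} [Countable ι] {S : ι → Set (Set A)}
    (h : ∀ i, SigmaBounded I (S i)) : SigmaBounded I (⋃ i, S i) := by
  choose C hC hCI hSC using h
  refine ⟨⋃ i, C i, countable_iUnion hC, iUnion_subset hCI, fun X hX => ?_⟩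
  obtain ⟨i, hi⟩ := mem_iUnion.1 hX
  obtain ⟨Y, hY, hXY⟩ := hSC i X hi
  exact ⟨Y, mem_iUnion_of_mem i hY, hXY⟩

lemma sigmaBounded_of_forall_subset {Y : Set A} (hY : Y ∈ I) (h : ∀ X ∈ S, X ⊆ Y) :
    SigmaBounded I S :=
  ⟨{Y}, countable_singleton Y, singleton_subset_iff.2 hY, fun X hX => ⟨Y, rfl, h X hX⟩⟩

lemma nonempty_of_not_sigmaBounded (h : ¬SigmaBounded I S) : S.Nonempty := by
  by_contra hS
  exact h ⟨∅, countable_empty, empty_subset I, fun X hX => (hS ⟨X, hX⟩).elim⟩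

end SigmaBounded

section Chi

lemma chi_eq_true_iff {X : Set ℕ} {a : ℕ} : chi X a = true ↔ a ∈ X := by
  simp [chi]

lemma chi_setOf_eq_true (x : ℕ → Bool) : chi {a | x a = true} = x := by
  funext a
  simp [chi]

lemma chi_injective : Function.Injective chi := fun X Y h => by
  ext a
  rw [← chi_eq_true_iff, h, chi_eq_true_iff]

lemma exists_finite_forall_chi_notMem {C : Set (ℕ → Bool)} (hC : IsClosed C)
    {S : Set (Set ℕ)} (h : ∀ Z, ⋃₀ S ⊆ Z → chi Z ∉ C) :
    ∃ F ⊆ S, F.Finite ∧ ∀ Z, ⋃₀ F ⊆ Z → chi Z ∉ C := by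
  set K : Set ℕ → Set (ℕ → Bool) := fun X => ⋂ a ∈ X, {x | x a = true}
  have hK : ∀ X, IsClosed (K X) := fun X =>
    isClosed_biInter fun a _ => isClosed_eq (continuous_apply a) continuous_const
  have hchiK : ∀ {X Z}, X ⊆ Z → chi Z ∈ K X := fun hXZ =>
    mem_iInter₂.2 fun _ ha => chi_eq_true_iff.2 (hXZ ha)
  have hempty : C ∩ ⋂ X : S, K X = ∅ := by
    refine eq_empty_of_forall_notMem fun x ⟨hxC, hxK⟩ => h {a | x a = true} ?_ ?_
    · rintro a ⟨X, hX, ha⟩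
      exact mem_iInter₂.1 (mem_iInter.1 hxK ⟨X, hX⟩) a ha
    · rwa [chi_setOf_eq_true]
  obtain ⟨u, hu⟩ :=
    hC.isCompact.elim_finite_subfamily_closed (fun X : S => K X) (fun X => hK X) hempty
  refine ⟨Subtype.val '' (u : Set S), by rintro _ ⟨X, -, rfl⟩; exact X.2,
    u.finite_toSet.image _, fun Z hZ hZC => ?_⟩
  have hmem : chi Z ∈ C ∩ ⋂ X ∈ u, K X :=
    ⟨hZC, mem_iInter₂.2 fun X hX => hchiK fun a ha => hZ ⟨X, ⟨X, hX, rfl⟩, ha⟩⟩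
  rw [hu] at hmem
  exact hmem

end Chi

section NowhereDense

variable {α : Type*} [TopologicalSpace α]

lemma IsOpen.sdiff_nonempty_of_isNowhereDense {O K : Set α} (hO : IsOpen O) (hOne : O.Nonempty)
    (hK : IsClosed K ∧ IsNowhereDense K) : IsOpen (O \ K) ∧ (O \ K).Nonempty := by
  rw [isClosed_isNowhereDense_iff_compl] at hK
  exact ⟨hO.inter hK.1, hK.2.inter_open_nonempty O hO hOne⟩

lemma IsClosed.isNowhereDense_union {s t : Set α} (hs : IsClosed s ∧ IsNowhereDense s)
    (ht : IsClosed t ∧ IsNowhereDense t) : IsClosed (s ∪ t) ∧ IsNowhereDense (s ∪ t) := by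
  rw [isClosed_isNowhereDense_iff_compl] at hs ht ⊢
  rw [compl_union]
  exact ⟨hs.1.inter ht.1, hs.2.inter_of_isOpen_left ht.2 hs.1⟩

lemma Set.Finite.isClosed_isNowhereDense_biUnion {ι : Type*} {E : Set ι} (hE : E.Finite)
    {g : ι → Set α} (hg : ∀ i ∈ E, IsClosed (g i) ∧ IsNowhereDense (g i)) :
    IsClosed (⋃ i ∈ E, g i) ∧ IsNowhereDense (⋃ i ∈ E, g i) := by
  induction E, hE using Set.Finite.induction_on with
  | empty => simp
  | insert _ _ ih =>
    rw [biUnion_insert]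
    exact IsClosed.isNowhereDense_union (hg _ (mem_insert _ _))
      (ih fun i hi => hg i (mem_insert_of_mem _ hi))

def IsPiBaseSeq (V : ℕ → Set α) : Prop :=
  (∀ n, IsOpen (V n) ∧ (V n).Nonempty) ∧ ∀ O, IsOpen O → O.Nonempty → ∃ n, V n ⊆ O

lemma exists_isPiBaseSeq [SecondCountableTopology α] [Nonempty α] :
    ∃ V : ℕ → Set α, IsPiBaseSeq V := by
  obtain ⟨b, hbc, hbe, hb⟩ := exists_countable_basis α
  obtain ⟨x⟩ := ‹Nonempty α›
  obtain ⟨W, hWb, -, -⟩ := hb.exists_subset_of_mem_open (mem_univ x) isOpen_univ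
  obtain ⟨V, rfl⟩ := hbc.exists_eq_range ⟨W, hWb⟩
  refine ⟨V, fun n => ⟨hb.isOpen (mem_range_self n), ?_⟩, fun O hO ⟨y, hy⟩ => ?_⟩
  · exact nonempty_iff_ne_empty.2 fun h => hbe (h ▸ mem_range_self n)
  · obtain ⟨_, ⟨n, rfl⟩, -, hnO⟩ := hb.exists_subset_of_mem_open hy hO
    exact ⟨n, hnO⟩

end NowhereDense

section Construction

variable {α : Type*} [TopologicalSpace α] {I : Set (Set ℕ)} {g : Set ℕ → Set α}

/-- `S` is the reservoir from which the sets in `E` are picked. -/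
structure Stage (α : Type*) where
  S : Set (Set ℕ)
  E : Set (Set ℕ)
  U : Set α

structure Stage.IsValid (I : Set (Set ℕ)) (g : Set ℕ → Set α) (s : Stage α) : Prop where
  S_subset : s.S ⊆ I
  not_sigmaBounded : ¬SigmaBounded I s.S
  E_finite : s.E.Finite
  E_subset : s.E ⊆ I
  isOpen_U : IsOpen s.U
  disjoint : ∀ X ∈ s.S ∪ s.E, Disjoint (g X) s.U

structure Stage.Extends (C : Set (ℕ → Bool)) (O : Set α) (s t : Stage α) : Prop where
  E_subset : s.E ⊆ t.E
  U_subset : s.U ⊆ t.U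
  inter_nonempty : (O ∩ t.U).Nonempty
  chi_notMem : ∀ Z, ⋃₀ t.E ⊆ Z → chi Z ∉ C

/-- The reservoir is split into countably many pieces according to which member of the π-base
inside `O` the image avoids; one piece is not σ-bounded, and compactness of `C` picks finitely
many of its members that no set coded in `C` can cover. -/
lemma Stage.IsValid.exists_extends {V : ℕ → Set α} (hV : IsPiBaseSeq V)
    (hg : ∀ X ∈ I, IsClosed (g X) ∧ IsNowhereDense (g X))
    {C : Set (ℕ → Bool)} (hC : IsClosed C) (hCI : ∀ Z, chi Z ∈ C → Z ∈ I)
    {O : Set α} (hO : IsOpen O) (hOne : O.Nonempty) {s : Stage α} (hs : s.IsValid I g) :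
    ∃ t : Stage α, t.IsValid I g ∧ s.Extends C O t := by
  set N := ⋃ X ∈ s.E, g X
  obtain ⟨hON, hONne⟩ := hO.sdiff_nonempty_of_isNowhereDense hOne
    (hs.E_finite.isClosed_isNowhereDense_biUnion fun X hX => hg X (hs.E_subset hX))
  set T : ℕ → Set (Set ℕ) := fun n => {X ∈ s.S | V n ⊆ O \ N ∧ Disjoint (g X) (V n)}
  have hcover : s.S ⊆ ⋃ n, T n := fun X hX => by
    obtain ⟨hOX, hOXne⟩ := hON.sdiff_nonempty_of_isNowhereDense hONne (hg X (hs.S_subset hX))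
    obtain ⟨n, hn⟩ := hV.2 _ hOX hOXne
    exact mem_iUnion.2 ⟨n, hX, (subset_sdiff.1 hn).1, (subset_sdiff.1 hn).2.symm⟩
  obtain ⟨n, hn⟩ : ∃ n, ¬SigmaBounded I (T n) := by
    by_contra! h
    exact hs.not_sigmaBounded ((SigmaBounded.iUnion h).mono hcover)
  obtain ⟨-, -, hVn, -⟩ := nonempty_of_not_sigmaBounded hn
  have hTS : T n ⊆ s.S := fun X hX => hX.1
  obtain ⟨F, hFsub, hFfin, hF⟩ : ∃ F ⊆ s.E ∪ T n, F.Finite ∧ ∀ Z, ⋃₀ F ⊆ Z → chi Z ∉ C := by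
    refine exists_finite_forall_chi_notMem hC fun Z hZ hZC => hn ?_
    exact sigmaBounded_of_forall_subset (hCI Z hZC) fun X hX =>
      hZ.trans' (subset_sUnion_of_mem (mem_union_right _ hX))
  have hET : s.E ∪ F ⊆ s.E ∪ T n := union_subset subset_union_left hFsub
  have hdisj : ∀ X ∈ T n ∪ (s.E ∪ F), Disjoint (g X) (s.U ∪ V n) := by
    intro X hX
    rcases union_subset subset_union_right hET hX with hXE | hXT
    · exact disjoint_union_right.2 ⟨hs.disjoint X (mem_union_right _ hXE),
        (disjoint_sdiff_right.mono_left (subset_biUnion_of_mem hXE)).mono_right hVn⟩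
    · exact disjoint_union_right.2 ⟨hs.disjoint X (mem_union_left _ hXT.1), hXT.2.2⟩
  refine ⟨⟨T n, s.E ∪ F, s.U ∪ V n⟩,
    ⟨hTS.trans hs.S_subset, hn, hs.E_finite.union hFfin,
      hET.trans (union_subset hs.E_subset (hTS.trans hs.S_subset)),
      hs.isOpen_U.union (hV.1 n).1, hdisj⟩,
    ⟨subset_union_left, subset_union_left, ?_, ?_⟩⟩
  · exact (hV.1 n).2.mono (subset_inter (hVn.trans sdiff_subset) subset_union_right)
  · exact fun Z hZ => hF Z ((sUnion_mono subset_union_right).trans hZ)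

lemma exists_seq_stage {V : ℕ → Set α} (hV : IsPiBaseSeq V)
    (hg : ∀ X ∈ I, IsClosed (g X) ∧ IsNowhereDense (g X))
    {C : ℕ → Set (ℕ → Bool)} (hC : ∀ n, IsClosed (C n)) (hCI : ∀ n Z, chi Z ∈ C n → Z ∈ I)
    (hI : ¬SigmaBounded I I) :
    ∃ s : ℕ → Stage α, (∀ k, (s k).IsValid I g) ∧
      ∀ k, (s k).Extends (C k) (V k) (s (k + 1)) := by
  choose! next hnext using fun k (s : Stage α) (hs : s.IsValid I g) =>
    hs.exists_extends hV hg (hC k) (hCI k) (hV.1 k).1 (hV.1 k).2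
  let s : ℕ → Stage α := fun k => Nat.rec ⟨I, ∅, ∅⟩ next k
  have hs : ∀ k, (s k).IsValid I g := by
    intro k
    induction k with
    | zero => exact ⟨subset_rfl, hI, finite_empty, empty_subset I, isOpen_empty,
        fun X _ => disjoint_empty _⟩
    | succ k ih => exact (hnext k (s k) ih).1
  exact ⟨s, hs, fun k => (hnext k (s k) (hs k)).2⟩

theorem exists_unbounded_disjoint_dense_open {V : ℕ → Set α} (hV : IsPiBaseSeq V)
    (hg : ∀ X ∈ I, IsClosed (g X) ∧ IsNowhereDense (g X))
    {C : ℕ → Set (ℕ → Bool)} (hC : ∀ n, IsClosed (C n)) (hCI : chi '' I = ⋃ n, C n)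
    (hI : ¬SigmaBounded I I) :
    ∃ E ⊆ I, (¬∃ Y ∈ I, ∀ X ∈ E, X ⊆ Y) ∧
      ∃ U : Set α, IsOpen U ∧ Dense U ∧ ∀ X ∈ E, Disjoint (g X) U := by
  have hmem : ∀ n Z, chi Z ∈ C n → Z ∈ I := fun n Z hZ => by
    obtain ⟨Y, hY, hYZ⟩ := hCI.symm ▸ mem_iUnion_of_mem n hZ
    exact chi_injective hYZ ▸ hY
  obtain ⟨s, hs, hext⟩ := exists_seq_stage hV hg hC hmem hI
  have hEmono : Monotone fun k => (s k).E := monotone_nat_of_le_succ fun k => (hext k).E_subset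
  have hUmono : Monotone fun k => (s k).U := monotone_nat_of_le_succ fun k => (hext k).U_subset
  refine ⟨⋃ k, (s k).E, iUnion_subset fun k => (hs k).E_subset, ?_,
    ⋃ k, (s k).U, isOpen_iUnion fun k => (hs k).isOpen_U, ?_, ?_⟩
  · rintro ⟨Y, hY, hEY⟩
    obtain ⟨n, hn⟩ := mem_iUnion.1 (hCI ▸ mem_image_of_mem chi hY)
    exact (hext n).chi_notMem Y (sUnion_subset fun X hX => hEY X (mem_iUnion_of_mem _ hX)) hn
  · refine dense_iff_inter_open.2 fun O hO hOne => ?_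
    obtain ⟨k, hk⟩ := hV.2 O hO hOne
    exact (hext k).inter_nonempty.mono (inter_subset_inter hk (subset_iUnion _ _))
  · intro X hX
    obtain ⟨j, hj⟩ := mem_iUnion.1 hX
    refine disjoint_iUnion_right.2 fun m => ?_
    exact ((hs (max j m)).disjoint X (mem_union_right _ (hEmono (le_max_left j m) hj))).mono_right
      (hUmono (le_max_right j m))

end Construction

lemma IsTukeyMap.exists_upperBound_of_disjoint_dense_open {P : Type*} [Preorder P]
    {f : P → {K // K ∈ NWD}} (hf : IsTukeyMap f) {E : Set P} {U : Set (ℕ → Bool)}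
    (hUo : IsOpen U) (hUd : Dense U) (hE : ∀ X ∈ E, Disjoint (f X).1 U) :
    ∃ Y, ∀ X ∈ E, X ≤ Y := by
  by_contra hunb
  have hUc : IsClosed Uᶜ ∧ IsNowhereDense Uᶜ :=
    isClosed_isNowhereDense_iff_compl.2 ⟨by rwa [compl_compl], by rwa [compl_compl]⟩
  refine hf E hunb ⟨⟨Uᶜ, hUc.1.isCompact, hUc.2⟩, ?_⟩
  rintro _ ⟨X, hX, rfl⟩
  exact (hE X hX).subset_compl_right

theorem FSigma_Tukey_below_NWD_countably_generated_general (I : Set (Set ℕ))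
    (hFσ : IsFSigma (chi '' I))
    (hT : TukeyLE {X // X ∈ I} {K // K ∈ NWD}) :
    SigmaBounded I I := by
  classical
  obtain ⟨f, hf⟩ := hT
  obtain ⟨C, hC, hCI⟩ := hFσ
  obtain ⟨V, hV⟩ := exists_isPiBaseSeq (α := ℕ → Bool)
  let g : Set ℕ → Set (ℕ → Bool) := fun X => if hX : X ∈ I then (f ⟨X, hX⟩).1 else ∅
  have hg_eq : ∀ X (hX : X ∈ I), g X = (f ⟨X, hX⟩).1 := fun X hX => dif_pos hX
  have hg : ∀ X ∈ I, IsClosed (g X) ∧ IsNowhereDense (g X) := fun X hX =>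
    hg_eq X hX ▸ ⟨(f _).2.1.isClosed, (f _).2.2⟩
  by_contra hI
  obtain ⟨E, hEI, hEunb, U, hUo, hUd, hEU⟩ :=
    exists_unbounded_disjoint_dense_open hV hg hC hCI hI
  obtain ⟨Y, hY⟩ := hf.exists_upperBound_of_disjoint_dense_open (E := Subtype.val ⁻¹' E)
    hUo hUd fun X hX => hg_eq X.1 X.2 ▸ hEU X hX
  exact hEunb ⟨Y.1, Y.2, fun X hX => hY ⟨X, hEI hX⟩ hX⟩

/-- If `I` is an `F_σ` ideal on `ℕ` and `(I, ⊆)` is Tukey-reducible to `NWD`, then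
`I` is countably generated (σ-bounded in itself). -/
theorem FSigma_Tukey_below_NWD_countably_generated (I : Set (Set ℕ))
    (hI : IsIdeal I) (hFσ : IsFSigma (chi '' I))
    (hT : TukeyLE {X // X ∈ I} {K // K ∈ NWD}) :
    SigmaBounded I I :=
  FSigma_Tukey_below_NWD_countably_generated_general I hFσ hT
end

section
/- Let I be an F_σ ideal on ℕ and let Z_k ⊆ I (k ∈ ℕ) each be unbounded in (I, ⊆). Then there exist finite sets H_k ⊆ Z_k (k ∈ ℕ) such that ⋃_{k∈ℕ} H_k is unbounded in (I, ⊆). -/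
lemma chi_mem_iff (Y : Set ℕ) (n : ℕ) : chi Y n = true ↔ n ∈ Y := by
  simp [chi]

lemma key_lemma (I : Set (Set ℕ)) (C : Set (ℕ → Bool)) (hC : IsClosed C)
    (hCI : C ⊆ chi '' I) (Z : Set (Set ℕ))
    (hunb : ¬ ∃ Y ∈ I, ∀ X ∈ Z, X ⊆ Y) :
    ∃ H : Finset (Set ℕ), ↑H ⊆ Z ∧ ¬ ∃ Y ∈ I, chi Y ∈ C ∧ ∀ X ∈ H, X ⊆ Y := by
  classical
  by_contra hcon
  push_neg at hcon
  -- hcon : ∀ H, ↑H ⊆ Z → ∃ Y ∈ I, chi Y ∈ C ∧ ∀ X ∈ H, X ⊆ Y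
  set ι := {H : Finset (Set ℕ) // ↑H ⊆ Z}
  have hι : Nonempty ι := ⟨⟨∅, by simp⟩⟩
  set t : ι → Set (ℕ → Bool) :=
    fun H => C ∩ ⋂ X ∈ H.1, ⋂ n ∈ X, {y : ℕ → Bool | y n = true} with ht
  have hmem : ∀ (H : ι) (y : ℕ → Bool),
      y ∈ t H ↔ y ∈ C ∧ ∀ X ∈ H.1, ∀ n ∈ X, y n = true := by
    intro H y
    simp [ht, Set.mem_iInter]
  have hdir : Directed (· ⊇ ·) t := by
    intro H₁ H₂
    refine ⟨⟨H₁.1 ∪ H₂.1, ?_⟩, ?_, ?_⟩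
    · intro X hX
      rcases Finset.mem_union.mp (by exact_mod_cast hX) with h | h
      · exact H₁.2 h
      · exact H₂.2 h
    · intro y hy
      rw [hmem] at hy ⊢
      exact ⟨hy.1, fun X hX n hn => hy.2 X (Finset.mem_union_left _ hX) n hn⟩
    · intro y hy
      rw [hmem] at hy ⊢
      exact ⟨hy.1, fun X hX n hn => hy.2 X (Finset.mem_union_right _ hX) n hn⟩
  have hne : ∀ H : ι, (t H).Nonempty := by
    intro H
    obtain ⟨Y, hYI, hYC, hYb⟩ := hcon H.1 H.2
    refine ⟨chi Y, (hmem H (chi Y)).mpr ⟨hYC, fun X hX n hn => ?_⟩⟩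
    exact (chi_mem_iff Y n).mpr (hYb X hX hn)
  have hclosed : ∀ H : ι, IsClosed (t H) := by
    intro H
    refine hC.inter (isClosed_biInter fun X hX => isClosed_biInter fun n hn => ?_)
    exact isClosed_eq (continuous_apply n) continuous_const
  have hcomp : ∀ H : ι, IsCompact (t H) := fun H => (hclosed H).isCompact
  obtain ⟨y, hy⟩ :=
    IsCompact.nonempty_iInter_of_directed_nonempty_isCompact_isClosed t hdir hne hcomp hclosed
  simp only [Set.mem_iInter] at hy
  have hyC : y ∈ C := ((hmem ⟨∅, by simp⟩ y).mp (hy _)).1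
  obtain ⟨Y, hYI, hYy⟩ := hCI hyC
  refine hunb ⟨Y, hYI, fun X hXZ n hn => ?_⟩
  have hX : ↑({X} : Finset (Set ℕ)) ⊆ Z := by simpa using hXZ
  have := ((hmem ⟨{X}, hX⟩ y).mp (hy _)).2 X (by simp) n hn
  rw [← hYy] at this
  exact (chi_mem_iff Y n).mp this

/-- For an `F_σ` ideal `I` on `ℕ` and unbounded subsets `Z_k ⊆ I`, there are finite
`H_k ⊆ Z_k` with `⋃ₖ H_k` unbounded in `(I, ⊆)`. -/
theorem FSigma_finite_selection_unbounded (I : Set (Set ℕ))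
    (hI : IsIdeal I) (hFσ : IsFSigma (chi '' I))
    (Z : ℕ → Set (Set ℕ)) (hsub : ∀ k, Z k ⊆ I)
    (hunb : ∀ k, ¬ ∃ Y ∈ I, ∀ X ∈ Z k, X ⊆ Y) :
    ∃ H : ℕ → Set (Set ℕ), (∀ k, H k ⊆ Z k) ∧ (∀ k, (H k).Finite) ∧
      ¬ ∃ Y ∈ I, ∀ X ∈ ⋃ k, H k, X ⊆ Y := by
  obtain ⟨C, hCcl, hCeq⟩ := hFσ
  have hCI : ∀ k, C k ⊆ chi '' I := fun k => hCeq ▸ Set.subset_iUnion C k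
  have hkey : ∀ k, ∃ H : Finset (Set ℕ), ↑H ⊆ Z k ∧
      ¬ ∃ Y ∈ I, chi Y ∈ C k ∧ ∀ X ∈ H, X ⊆ Y :=
    fun k => key_lemma I (C k) (hCcl k) (hCI k) (Z k) (hunb k)
  choose F hF1 hF2 using hkey
  refine ⟨fun k => ↑(F k), hF1, fun k => (F k).finite_toSet, ?_⟩
  rintro ⟨Y, hYI, hYb⟩
  have : chi Y ∈ ⋃ n, C n := hCeq ▸ Set.mem_image_of_mem chi hYI
  obtain ⟨k, hk⟩ := Set.mem_iUnion.mp this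
  exact hF2 k ⟨Y, hYI, hk, fun X hX => hYb X (Set.mem_iUnion.mpr ⟨k, hX⟩)⟩
end

section
/- The ideal ∅×Fin = {X ⊆ ℕ×ℕ : for every m, the set {n : (m,n) ∈ X} is finite}, ordered by ⊆, is Tukey-reducible to NWD. -/
/-- The ideal `∅ × Fin` on `ℕ × ℕ`. -/
def emptyTimesFin : Set (Set (ℕ × ℕ)) := {X | ∀ m : ℕ, {n : ℕ | (m, n) ∈ X}.Finite}

/-!
The column bound `X ↦ columnBound X` is a Tukey map from `∅ × Fin` to `ℕ → ℕ` (pointwise order).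
From `g : ℕ → ℕ` build `tailVanishing g`: the sequences in `2^ω` that vanish beyond `m + g m`,
where `m` is the position of their first `1`. It is closed and consists of eventually-zero
sequences, hence compact nowhere dense. If a closed `B` contains `tailVanishing g` for all `g ∈ S`
while `{g m | g ∈ S}` is unbounded, then every truncation of a point of the clopen cylinder
"first `1` at `m`" lies in some `tailVanishing g`, so the whole cylinder lies in `B`, and `B` is
not nowhere dense.
-/

open Filter Topology Set

section Tukey

variable {P Q R : Type*} [Preorder P] [Preorder Q] [Preorder R]

theorem isTukeyMap_iff {f : P → Q} :
    IsTukeyMap f ↔ ∀ S : Set P, BddAbove (f '' S) → BddAbove S :=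
  forall_congr' fun _ => not_imp_not

theorem IsTukeyMap.comp {g : Q → R} {f : P → Q} (hg : IsTukeyMap g) (hf : IsTukeyMap f) :
    IsTukeyMap (g ∘ f) := fun S hS => by
  rw [image_comp]
  exact hg _ (hf S hS)

end Tukey

noncomputable def columnBound (X : Set (ℕ × ℕ)) (m : ℕ) : ℕ := sSup {n | (m, n) ∈ X}

theorem le_columnBound {X : Set (ℕ × ℕ)} (hX : X ∈ emptyTimesFin) {m n : ℕ} (h : (m, n) ∈ X) :
    n ≤ columnBound X m :=
  le_csSup (hX m).bddAbove h

theorem isTukeyMap_columnBound :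
    IsTukeyMap fun X : {X // X ∈ emptyTimesFin} => columnBound X.1 := by
  refine isTukeyMap_iff.2 fun S ⟨h, hh⟩ => ?_
  refine ⟨⟨{p | p.2 ≤ h p.1}, fun m => finite_Iic (h m)⟩, fun X hX p hp => ?_⟩
  exact (le_columnBound X.2 hp).trans (hh ⟨X, hX, rfl⟩ p.1)

section Cantor

variable {α : Type*} [TopologicalSpace α]

theorem tendsto_ite_lt_atTop (x z : ℕ → α) :
    Tendsto (fun N j => if j < N then x j else z j) atTop (𝓝 x) := by
  refine tendsto_pi_nhds.2 fun j => tendsto_const_nhds.congr' ?_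
  filter_upwards [eventually_gt_atTop j] with N hN
  rw [if_pos hN]

theorem interior_setOf_eventually_eq_eq_empty [Nontrivial α] (a : α) :
    interior {x : ℕ → α | ∀ᶠ n in atTop, x n = a} = ∅ := by
  obtain ⟨c, hc⟩ := exists_ne a
  refine interior_eq_empty_iff_dense_compl.2 fun x => ?_
  refine mem_closure_of_tendsto (tendsto_ite_lt_atTop x fun _ => c) (Eventually.of_forall ?_)
  intro N hN
  obtain ⟨n, hna, hn⟩ := (hN.and (eventually_ge_atTop N)).exists
  exact hc (by simpa [if_neg (not_lt.2 hn)] using hna)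

end Cantor

def firstOneAt (m : ℕ) : Set (ℕ → Bool) := {x | (∀ j < m, x j = false) ∧ x m = true}

theorem isClopen_setOf_apply_eq (i : ℕ) (b : Bool) : IsClopen {x : ℕ → Bool | x i = b} :=
  (isClopen_discrete {b}).preimage (continuous_apply i)

theorem isOpen_firstOneAt (m : ℕ) : IsOpen (firstOneAt m) := by
  have : firstOneAt m = (⋂ j ∈ Iio m, {x | x j = false}) ∩ {x | x m = true} := by
    ext x; simp [firstOneAt]
  rw [this]
  exact ((finite_Iio m).isOpen_biInter fun j _ => (isClopen_setOf_apply_eq j false).isOpen).inter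
    (isClopen_setOf_apply_eq m true).isOpen

theorem firstOneAt_nonempty (m : ℕ) : (firstOneAt m).Nonempty :=
  ⟨fun j => decide (j = m), fun _ hj => decide_eq_false hj.ne, decide_eq_true rfl⟩

theorem eq_of_mem_firstOneAt {x : ℕ → Bool} {m m' : ℕ} (h : x ∈ firstOneAt m)
    (h' : x ∈ firstOneAt m') : m = m' :=
  le_antisymm (not_lt.1 fun hlt => Bool.false_ne_true ((h.1 m' hlt).symm.trans h'.2))
    (not_lt.1 fun hlt => Bool.false_ne_true ((h'.1 m hlt).symm.trans h.2))

theorem exists_mem_firstOneAt {x : ℕ → Bool} (hx : ∃ k, x k = true) : ∃ m, x ∈ firstOneAt m :=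
  ⟨Nat.find hx, fun _ hj => by simpa using Nat.find_min hx hj, Nat.find_spec hx⟩

theorem ite_lt_mem_firstOneAt {x : ℕ → Bool} {m N : ℕ} (hx : x ∈ firstOneAt m) (hmN : m < N)
    (z : ℕ → Bool) : (fun j => if j < N then x j else z j) ∈ firstOneAt m :=
  ⟨fun j hj => by simp [hx.1 j hj, hj.trans hmN], by simp [hx.2, hmN]⟩

def tailVanishing (g : ℕ → ℕ) : Set (ℕ → Bool) :=
  {x | ∀ m k, x ∈ firstOneAt m → m + g m < k → x k = false}

theorem isClosed_tailVanishing (g : ℕ → ℕ) : IsClosed (tailVanishing g) := by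
  simp only [tailVanishing, ofPred_forall]
  exact isClosed_iInter fun m => isClosed_iInter fun k => isClosed_imp (isOpen_firstOneAt m) <|
    isClosed_imp isOpen_const (isClopen_setOf_apply_eq k false).isClosed

theorem eventually_false_of_mem_tailVanishing {g : ℕ → ℕ} {x : ℕ → Bool}
    (hx : x ∈ tailVanishing g) : ∀ᶠ n in atTop, x n = false := by
  by_cases h : ∃ k, x k = true
  · obtain ⟨m, hm⟩ := exists_mem_firstOneAt h
    filter_upwards [eventually_gt_atTop (m + g m)] with k hk using hx m k hm hk
  · simp only [not_exists, Bool.not_eq_true] at h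
    exact Eventually.of_forall h

theorem isNowhereDense_tailVanishing (g : ℕ → ℕ) : IsNowhereDense (tailVanishing g) :=
  (isClosed_tailVanishing g).isNowhereDense_iff.2 <| subset_empty_iff.1 <|
    (interior_mono fun _ => eventually_false_of_mem_tailVanishing).trans
      (interior_setOf_eventually_eq_eq_empty false).subset

theorem tailVanishing_mem_NWD (g : ℕ → ℕ) : tailVanishing g ∈ NWD :=
  ⟨(isClosed_tailVanishing g).isCompact, isNowhereDense_tailVanishing g⟩

theorem ite_lt_mem_tailVanishing {g : ℕ → ℕ} {x : ℕ → Bool} {m N : ℕ} (hx : x ∈ firstOneAt m)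
    (hmN : m < N) (hNg : N ≤ g m) : (fun j => if j < N then x j else false) ∈ tailVanishing g := by
  intro m' k hm' hk
  obtain rfl := eq_of_mem_firstOneAt (ite_lt_mem_firstOneAt hx hmN fun _ => false) hm'
  simp only [ite_eq_right_iff]
  omega

theorem firstOneAt_subset_of_tailVanishing_subset {S : Set (ℕ → ℕ)} {B : Set (ℕ → Bool)}
    (hB : IsClosed B) (hSB : ∀ g ∈ S, tailVanishing g ⊆ B) {m : ℕ}
    (hS : ∀ N, ∃ g ∈ S, N ≤ g m) : firstOneAt m ⊆ B := by
  intro x hx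
  refine hB.mem_of_tendsto (tendsto_ite_lt_atTop x fun _ => false) ?_
  filter_upwards [eventually_gt_atTop m] with N hN
  obtain ⟨g, hg, hNg⟩ := hS N
  exact hSB g hg (ite_lt_mem_tailVanishing hx hN hNg)

theorem isTukeyMap_tailVanishing :
    IsTukeyMap fun g : ℕ → ℕ => (⟨tailVanishing g, tailVanishing_mem_NWD g⟩ : {K // K ∈ NWD}) := by
  refine isTukeyMap_iff.2 fun S ⟨B, hB⟩ => bddAbove_pi.2 fun m => ?_
  by_contra hm
  have hB_closed := B.2.1.isClosed
  have hsub : firstOneAt m ⊆ B.1 :=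
    firstOneAt_subset_of_tailVanishing_subset hB_closed (fun g hg => hB ⟨g, hg, rfl⟩) fun N => by
      obtain ⟨_, ⟨g, hg, rfl⟩, hlt⟩ := not_bddAbove_iff.1 hm N
      exact ⟨g, hg, hlt.le⟩
  have hint : interior B.1 = ∅ := hB_closed.isNowhereDense_iff.1 B.2.2
  exact ((firstOneAt_nonempty m).mono (interior_maximal hsub (isOpen_firstOneAt m))).ne_empty hint

/-- `∅ × Fin` is Tukey-reducible to `NWD`. -/
theorem emptyTimesFin_Tukey_le_NWD :
    TukeyLE {X // X ∈ emptyTimesFin} {K // K ∈ NWD} :=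
  ⟨_, isTukeyMap_tailVanishing.comp isTukeyMap_columnBound⟩
end

section
/- For every countable ordinal α, I_ω is weak Rudin–Keisler reducible to I_{ω^{α+1}}: I_ω ≤_wRK I_{ω^{α+1}}. -/
/-- `Ialpha α`: sets of binary strings admitting an order-reversing map into `α`,
i.e. `f t < f s` whenever `s` is a proper prefix of `t` (both in `X`). -/
def Ialpha (α : Ordinal) : Set (Set (List Bool)) :=
  {X | ∃ f : List Bool → Ordinal, (∀ s ∈ X, f s < α) ∧
    ∀ s ∈ X, ∀ t ∈ X, s <+: t → s ≠ t → f t < f s}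

/-- Weak Rudin–Keisler reducibility: there is an infinite `B' ⊆ B` and `f : B' → A`
such that `X ∈ I ↔ f⁻¹[X] ∈ J` for all `X ⊆ A`. -/
def wRK {A B : Type*} (I : Set (Set A)) (J : Set (Set B)) : Prop :=
  ∃ (B' : Set B) (f : B' → A), B'.Infinite ∧
    ∀ X : Set A, X ∈ I ↔ (Subtype.val '' (f ⁻¹' X)) ∈ J

/-!
Write `o = ω ^ α`, a countable ordinal with `ω ^ (α + 1) = o * ω`. Blow up the binary tree by
replacing each node `s` with a copy of the tree of strictly decreasing sequences of ordinals below
`o`, a tree of rank exactly `o`, every node of the copy over `s` lying below the copies over the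
children of `s`; the reduction projects the blow-up back onto the binary tree. A rank `v : X → ω`
gives the preimage of `X` the rank `o * v s + γ`. Conversely, if `H` ranks the preimage below
`o * ω` and `V s` is the least value of `H` on the copy over `s`, then `V t + o ≤ V s` whenever `s`
is a proper prefix of `t`: every node over `s` lies below a full copy over `t`, on which `H` must
reach `V t + γ` for each `γ < o`. So `V / o` ranks `X` below `ω`. The blow-up is a tree of words
over the countable alphabet `o ⊕ 2`, which a prefix code embeds into the binary tree.
-/

open Cardinal Ordinal

namespace Iomega

def PrefixStrictAntiOn {σ β : Type*} [LT β] (f : List σ → β) (Y : Set (List σ)) : Prop :=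
  ∀ s ∈ Y, ∀ t ∈ Y, s <+: t → s ≠ t → f t < f s

def rankIdeal (σ : Type*) (β : Ordinal) : Set (Set (List σ)) :=
  {X | ∃ f : List σ → Ordinal, (∀ s ∈ X, f s < β) ∧ PrefixStrictAntiOn f X}

theorem mem_Ialpha_omega0_iff {X : Set (List Bool)} :
    X ∈ Ialpha ω ↔ ∃ v : List Bool → ℕ, PrefixStrictAntiOn v X := by
  constructor
  · rintro ⟨f, hlt, hdec⟩
    choose! v hv using fun s (hs : s ∈ X) => lt_omega0.mp (hlt s hs)
    refine ⟨v, fun s hs t ht hst hne => ?_⟩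
    have := hdec s hs t ht hst hne
    rwa [hv s hs, hv t ht, Nat.cast_lt] at this
  · rintro ⟨v, hv⟩
    exact ⟨fun s => v s, fun s _ => natCast_lt_omega0 _,
      fun s hs t ht hst hne => Nat.cast_lt.mpr (hv s hs t ht hst hne)⟩

theorem injective_of_prefix_iff {σ τ : Type*} {e : List σ → List τ}
    (he : ∀ s t, e s <+: e t ↔ s <+: t) : e.Injective := fun s t h =>
  have hst := (he s t).1 (h ▸ List.prefix_refl _)
  hst.eq_of_length (hst.length_le.antisymm ((he t s).1 (h ▸ List.prefix_refl _)).length_le)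

theorem image_mem_rankIdeal_iff {σ τ : Type*} {e : List σ → List τ}
    (he : ∀ s t, e s <+: e t ↔ s <+: t) {β : Ordinal} {Y : Set (List σ)} :
    e '' Y ∈ rankIdeal τ β ↔ Y ∈ rankIdeal σ β := by
  have hinj := injective_of_prefix_iff he
  constructor
  · rintro ⟨f, hlt, hdec⟩
    exact ⟨f ∘ e, fun s hs => hlt _ (Set.mem_image_of_mem e hs), fun s hs t ht hst hne =>
      hdec _ (Set.mem_image_of_mem e hs) _ (Set.mem_image_of_mem e ht) ((he s t).2 hst)
        (hinj.ne hne)⟩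
  · rintro ⟨f, hlt, hdec⟩
    have hinv := Function.leftInverse_invFun (f := e) hinj
    refine ⟨f ∘ Function.invFun e, ?_, ?_⟩
    · rintro _ ⟨s, hs, rfl⟩
      simpa [hinv s] using hlt s hs
    · rintro _ ⟨s, hs, rfl⟩ _ ⟨t, ht, rfl⟩ hst hne
      simpa [hinv s, hinv t] using hdec s hs t ht ((he s t).1 hst) (ne_of_apply_ne e hne)

theorem wRK_of_prefix_embedding {σ A : Type*} {I : Set (Set A)} {β : Ordinal}
    {e : List σ → List Bool} (he : ∀ s t, e s <+: e t ↔ s <+: t)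
    {B : Set (List σ)} (hB : B.Infinite) (p : List σ → A)
    (h : ∀ X, X ∈ I ↔ B ∩ p ⁻¹' X ∈ rankIdeal σ β) : wRK I (Ialpha β) := by
  have hinv := Function.leftInverse_invFun (injective_of_prefix_iff he)
  refine ⟨e '' B, fun x => p (Function.invFun e x), hB.image (injective_of_prefix_iff he).injOn,
    fun X => ?_⟩
  have himage : Subtype.val '' ((fun x : e '' B => p (Function.invFun e x)) ⁻¹' X) =
      e '' (B ∩ p ⁻¹' X) := by
    ext u
    constructor
    · rintro ⟨⟨_, s, hs, rfl⟩, hsX, rfl⟩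
      exact ⟨s, ⟨hs, by simpa [hinv s] using hsX⟩, rfl⟩
    · rintro ⟨s, ⟨hs, hsX⟩, rfl⟩
      exact ⟨⟨e s, s, hs, rfl⟩, by simpa [hinv s] using hsX, rfl⟩
  rw [h, himage]
  exact (image_mem_rankIdeal_iff he).symm

theorem flatMap_prefix_flatMap_iff {α β : Type*} {c : α → List β}
    (hc : ∀ a b, c a <+: c b → a = b) (hne : ∀ a, c a ≠ []) {s t : List α} :
    s.flatMap c <+: t.flatMap c ↔ s <+: t := by
  refine ⟨fun h => ?_, fun h => h.flatMap c⟩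
  induction s generalizing t with
  | nil => exact List.nil_prefix
  | cons a s ih =>
    cases t with
    | nil =>
      simp only [List.flatMap_cons, List.flatMap_nil] at h
      exact absurd (List.prefix_nil.mp ((List.prefix_append _ _).trans h)) (hne a)
    | cons b t =>
      simp only [List.flatMap_cons] at h
      obtain rfl : a = b := by
        rcases List.prefix_or_prefix_of_prefix ((List.prefix_append _ _).trans h)
          (List.prefix_append _ _) with hab | hba
        exacts [hc a b hab, (hc b a hba).symm]
      exact List.cons_prefix_cons.mpr ⟨rfl, ih ((List.prefix_append_right_inj _).mp h)⟩

def unaryCode (n : ℕ) : List Bool := List.replicate n false ++ [true]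

theorem eq_of_unaryCode_prefix {m n : ℕ} (h : unaryCode m <+: unaryCode n) : m = n := by
  induction m generalizing n with
  | zero => cases n <;> simp_all [unaryCode, List.replicate_succ]
  | succ m ih =>
    cases n with
    | zero => simp [unaryCode, List.replicate_succ] at h
    | succ n => simpa using ih (by simpa [unaryCode, List.replicate_succ] using h)

def binaryCode {σ : Type*} (ι : σ → ℕ) (w : List σ) : List Bool := w.flatMap (unaryCode ∘ ι)

theorem binaryCode_prefix_iff {σ : Type*} {ι : σ → ℕ} (hι : ι.Injective) (s t : List σ) :
    binaryCode ι s <+: binaryCode ι t ↔ s <+: t :=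
  flatMap_prefix_flatMap_iff (fun _ _ h => hι (eq_of_unaryCode_prefix h))
    (fun _ => by simp [unaryCode])

section Blowup

universe u

variable {o : Ordinal.{u}}

/- A word of the blow-up lists the moves of a path: `inl γ` goes down inside the current copy to
the decreasing sequence extended by `γ`, and `inr b` jumps to the copy over the `b`-child. -/
def Step : Set.Iio o ⊕ Bool → Set.Iio o ⊕ Bool → Prop
  | .inl x, .inl y => y < x
  | _, _ => True

variable (o) in
def blowup : Set (List (Set.Iio o ⊕ Bool)) :=
  {w | w.IsChain Step ∧ ∃ x, w.getLast? = some (.inl x)}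

def proj (w : List (Set.Iio o ⊕ Bool)) : List Bool := w.filterMap Sum.getRight?

def lastOrd (w : List (Set.Iio o ⊕ Bool)) : Ordinal.{u} :=
  match w.getLast? with
  | some (.inl x) => x
  | _ => 0

theorem proj_append (w d : List (Set.Iio o ⊕ Bool)) : proj (w ++ d) = proj w ++ proj d :=
  List.filterMap_append

theorem proj_append_inl (w : List (Set.Iio o ⊕ Bool)) (x : Set.Iio o) :
    proj (w ++ [.inl x]) = proj w := by
  simp [proj]

theorem lastOrd_of_getLast? {w : List (Set.Iio o ⊕ Bool)} {x : Set.Iio o}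
    (h : w.getLast? = some (.inl x)) : lastOrd w = x := by
  simp [lastOrd, h]

theorem lastOrd_append_inl (w : List (Set.Iio o ⊕ Bool)) (x : Set.Iio o) :
    lastOrd (w ++ [.inl x]) = x :=
  lastOrd_of_getLast? (by simp)

theorem lastOrd_lt {w : List (Set.Iio o ⊕ Bool)} (hw : w ∈ blowup o) : lastOrd w < o := by
  obtain ⟨x, hx⟩ := hw.2
  exact lastOrd_of_getLast? hx ▸ x.2

theorem lt_lastOrd_of_isChain {w d : List (Set.Iio o ⊕ Bool)} {y : Set.Iio o}
    (hw : w ∈ blowup o) (h : (w ++ .inl y :: d).IsChain Step) : (y : Ordinal) < lastOrd w := by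
  obtain ⟨x, hx⟩ := hw.2
  rw [lastOrd_of_getLast? hx]
  exact (List.isChain_append.mp h).2.2 _ hx _ rfl

theorem lastOrd_append_lt {w d : List (Set.Iio o ⊕ Bool)} (hw : w ∈ blowup o)
    (hwd : w ++ d ∈ blowup o) (hd : d ≠ []) (hproj : proj d = []) :
    lastOrd (w ++ d) < lastOrd w := by
  induction d generalizing w with
  | nil => contradiction
  | cons a d ih =>
    obtain ⟨y, rfl⟩ : ∃ y, a = .inl y := by
      cases a with
      | inl y => exact ⟨y, rfl⟩
      | inr b => simp [proj] at hproj
    have hy := lt_lastOrd_of_isChain hw hwd.1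
    rcases eq_or_ne d [] with rfl | hd'
    · rwa [lastOrd_append_inl]
    · rw [List.append_cons] at hwd ⊢
      have hwy : w ++ [.inl y] ∈ blowup o :=
        ⟨hwd.1.infix (List.prefix_append _ _).isInfix, y, by simp⟩
      have := ih hwy hwd hd' (by simpa [proj] using hproj)
      rw [lastOrd_append_inl] at this
      exact this.trans hy

theorem append_inl_mem_blowup {w : List (Set.Iio o ⊕ Bool)} (hw : w ∈ blowup o) {x : Set.Iio o}
    (hx : (x : Ordinal) < lastOrd w) : w ++ [.inl x] ∈ blowup o := by
  obtain ⟨y, hy⟩ := hw.2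
  refine ⟨hw.1.append (List.isChain_singleton _) fun a ha b hb => ?_, x, by simp⟩
  obtain rfl : a = .inl y := by simpa [hy] using ha.symm
  obtain rfl : b = .inl x := by simpa using hb.symm
  rwa [lastOrd_of_getLast? hy] at hx

theorem mul_add_lastOrd_lt {w : List (Set.Iio o ⊕ Bool)} (hw : w ∈ blowup o) (n : ℕ) :
    o * n + lastOrd w < o * (n + 1 : ℕ) := by
  push_cast
  rw [mul_add_one]
  exact add_lt_add_right (lastOrd_lt hw) _

theorem step_inr (a : Set.Iio o ⊕ Bool) (b : Bool) : Step a (.inr b) := by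
  cases a <;> trivial

theorem isChain_append_map_inr {v : List (Set.Iio o ⊕ Bool)} (hv : v.IsChain Step)
    (r : List Bool) : (v ++ r.map Sum.inr).IsChain Step := by
  refine hv.append ((List.isChain_map _).mpr (List.pairwise_of_forall fun _ _ => trivial).isChain)
    fun a _ b hb => ?_
  obtain ⟨c, -, rfl⟩ : ∃ c, r.head? = some c ∧ Sum.inr c = b := by simpa using hb
  exact step_inr a c

theorem lift_mem_blowup {v : List (Set.Iio o ⊕ Bool)} (hv : v.IsChain Step)
    (hlast : ∀ x, v.getLast? ≠ some (.inl x)) (r : List Bool) (γ : Set.Iio o) :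
    v ++ r.map .inr ++ [.inl γ] ∈ blowup o := by
  refine ⟨(isChain_append_map_inr hv r).append (List.isChain_singleton _) fun a ha b hb => ?_,
    γ, by simp⟩
  cases a with
  | inr c => trivial
  | inl x =>
    rcases r.eq_nil_or_concat with rfl | ⟨r, c, rfl⟩
    · exact absurd (by simpa using ha) (hlast x)
    · simp at ha

theorem proj_lift (v : List (Set.Iio o ⊕ Bool)) (r : List Bool) (γ : Set.Iio o) :
    proj (v ++ r.map .inr ++ [.inl γ]) = proj v ++ r := by
  simp [proj, List.filterMap_map, Function.comp_def]

theorem exists_mem_blowup_proj_eq (ho : 0 < o) (t : List Bool) :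
    ∃ w ∈ blowup o, proj w = t :=
  ⟨[] ++ t.map .inr ++ [.inl ⟨0, ho⟩], lift_mem_blowup List.isChain_nil (by simp) t _,
    by rw [proj_lift]; rfl⟩

theorem blowup_infinite (ho : 0 < o) : (blowup o).Infinite := by
  refine Set.Infinite.of_image proj (Set.infinite_univ.mono fun t _ => ?_)
  obtain ⟨w, hw, rfl⟩ := exists_mem_blowup_proj_eq ho t
  exact Set.mem_image_of_mem proj hw

theorem blowup_inter_preimage_mem_rankIdeal {X : Set (List Bool)} (v : List Bool → ℕ)
    (hv : PrefixStrictAntiOn v X) : blowup o ∩ proj ⁻¹' X ∈ rankIdeal _ (o * ω) := by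
  refine ⟨fun w => o * v (proj w) + lastOrd w, fun w ⟨hw, _⟩ => ?_, ?_⟩
  · calc o * v (proj w) + lastOrd w < o * (v (proj w) + 1 : ℕ) := mul_add_lastOrd_lt hw _
      _ < o * ω := (mul_lt_mul_iff_of_pos_left (zero_le.trans_lt (lastOrd_lt hw))).mpr
        (natCast_lt_omega0 _)
  · rintro w ⟨hw, hwX⟩ _ ⟨hwd, hwdX⟩ ⟨d, rfl⟩ hne
    have hd : d ≠ [] := by rintro rfl; simp at hne
    by_cases hproj : proj d = []
    · simp only [proj_append, hproj, List.append_nil]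
      exact add_lt_add_right (lastOrd_append_lt hw hwd hd hproj) _
    · have hlt : v (proj (w ++ d)) < v (proj w) := by
        refine hv _ hwX _ hwdX ?_ ?_ <;> rw [proj_append]
        exacts [List.prefix_append _ _, by simpa using hproj]
      calc o * v (proj (w ++ d)) + lastOrd (w ++ d) < o * (v (proj (w ++ d)) + 1 : ℕ) :=
            mul_add_lastOrd_lt hwd _
        _ ≤ o * v (proj w) := mul_le_mul_right (by exact_mod_cast hlt) o
        _ ≤ o * v (proj w) + lastOrd w := le_self_add

section Rank

variable {X : Set (List Bool)} {H : List (Set.Iio o ⊕ Bool) → Ordinal.{u}}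

theorem add_lastOrd_le (hH : PrefixStrictAntiOn H (blowup o ∩ proj ⁻¹' X)) {t : List Bool}
    (ht : t ∈ X) {a : Ordinal} (ha : ∀ w ∈ blowup o, proj w = t → a ≤ H w)
    {w : List (Set.Iio o ⊕ Bool)} (hw : w ∈ blowup o) (hwt : proj w = t) :
    a + lastOrd w ≤ H w := by
  induction hγ : lastOrd w using WellFoundedLT.induction generalizing w with
  | _ γ ih =>
    subst hγ
    rcases eq_zero_or_pos (lastOrd w) with h0 | hpos
    · simpa [h0] using ha w hw hwt
    rw [add_le_iff hpos.ne']
    intro δ hδ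
    let x : Set.Iio o := ⟨δ, hδ.trans (lastOrd_lt hw)⟩
    have hw' : w ++ [.inl x] ∈ blowup o := append_inl_mem_blowup hw hδ
    have hw't : proj (w ++ [.inl x]) = t := by rw [proj_append_inl, hwt]
    calc a + δ = a + lastOrd (w ++ [.inl x]) := by rw [lastOrd_append_inl]
      _ ≤ H (w ++ [.inl x]) := ih _ (by rwa [lastOrd_append_inl]) hw' hw't rfl
      _ < H w := hH _ ⟨hw, by rwa [Set.mem_preimage, hwt]⟩ _
        ⟨hw', by rwa [Set.mem_preimage, hw't]⟩ (List.prefix_append _ _) (by simp)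

theorem add_le_of_prefix (hH : PrefixStrictAntiOn H (blowup o ∩ proj ⁻¹' X)) (ho : 0 < o)
    {s t : List Bool} (hs : s ∈ X) (ht : t ∈ X) (hst : s <+: t) (hne : s ≠ t) {a : Ordinal}
    (ha : ∀ w ∈ blowup o, proj w = t → a ≤ H w) {u : List (Set.Iio o ⊕ Bool)}
    (hu : u ∈ blowup o) (hus : proj u = s) : a + o ≤ H u := by
  obtain ⟨_ | ⟨b, r⟩, rfl⟩ := hst
  · simp at hne
  rw [add_le_iff ho.ne']
  intro γ hγ
  let w := u ++ [.inr b] ++ r.map .inr ++ [.inl ⟨γ, hγ⟩]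
  have hw : w ∈ blowup o := lift_mem_blowup (isChain_append_map_inr hu.1 [b]) (by simp) r _
  have hwt : proj w = s ++ b :: r := by
    rw [proj_lift, proj_append, hus, List.append_assoc]
    rfl
  calc a + γ = a + lastOrd w := by rw [lastOrd_append_inl]
    _ ≤ H w := add_lastOrd_le hH ht ha hw hwt
    _ < H u := hH _ ⟨hu, by rwa [Set.mem_preimage, hus]⟩ _ ⟨hw, by rwa [Set.mem_preimage, hwt]⟩
        ⟨[.inr b] ++ r.map .inr ++ [.inl ⟨γ, hγ⟩], by simp [w]⟩ (by simp [w])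

end Rank

theorem mem_Ialpha_omega0_of_blowup_inter_preimage (ho : 0 < o) {X : Set (List Bool)}
    (hX : blowup o ∩ proj ⁻¹' X ∈ rankIdeal _ (o * ω)) : X ∈ Ialpha.{u} ω := by
  obtain ⟨H, hHlt, hH⟩ := hX
  let V : List Bool → Ordinal := fun t => sInf (H '' {w | w ∈ blowup o ∧ proj w = t})
  have hV_le : ∀ t, ∀ w ∈ blowup o, proj w = t → V t ≤ H w := fun t w hw hwt =>
    csInf_le' ⟨w, ⟨hw, hwt⟩, rfl⟩
  have hV_lt : ∀ t ∈ X, V t < o * ω := by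
    intro t ht
    obtain ⟨w, hw, rfl⟩ := exists_mem_blowup_proj_eq ho t
    exact (hV_le _ w hw rfl).trans_lt (hHlt w ⟨hw, ht⟩)
  have hV_add : ∀ s ∈ X, ∀ t ∈ X, s <+: t → s ≠ t → V t + o ≤ V s := by
    intro s hs t ht hst hne
    obtain ⟨u, hu, hus⟩ := exists_mem_blowup_proj_eq ho s
    refine le_csInf ⟨H u, u, ⟨hu, hus⟩, rfl⟩ ?_
    rintro _ ⟨u, ⟨hu, hus⟩, rfl⟩
    exact add_le_of_prefix hH ho hs ht hst hne (hV_le t) hu hus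
  refine ⟨fun t => V t / o, fun t ht => (lt_mul_iff_div_lt ho.ne').1 (hV_lt t ht),
    fun s hs t ht hst hne => ?_⟩
  rw [← Order.add_one_le_iff, ← mul_le_iff_le_div ho.ne']
  calc o * (V t / o + 1) = o * (V t / o) + o := mul_add_one _ _
    _ ≤ V t + o := add_le_add_left (mul_div_le _ _) _
    _ ≤ V s := hV_add s hs t ht hst hne

end Blowup

theorem countable_Iio_of_card_le_aleph0 {o : Ordinal} (h : o.card ≤ ℵ₀) :
    Countable (Set.Iio o) := by
  rwa [← Cardinal.mk_le_aleph0_iff, Cardinal.mk_Iio_ordinal, Cardinal.lift_le_aleph0]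

theorem wRK_Ialpha_omega0_mul_omega0 {o : Ordinal} (ho : 0 < o) (hcount : o.card ≤ ℵ₀) :
    wRK (Ialpha ω) (Ialpha (o * ω)) := by
  have := countable_Iio_of_card_le_aleph0 hcount
  obtain ⟨ι, hι⟩ := exists_injective_nat (Set.Iio o ⊕ Bool)
  refine wRK_of_prefix_embedding (binaryCode_prefix_iff hι) (blowup_infinite ho) proj fun X => ?_
  rw [mem_Ialpha_omega0_iff]
  exact ⟨fun ⟨v, hv⟩ => blowup_inter_preimage_mem_rankIdeal v hv,
    fun hX => mem_Ialpha_omega0_iff.mp (mem_Ialpha_omega0_of_blowup_inter_preimage ho hX)⟩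

end Iomega

/-- For every countable ordinal `α`, `I_ω ≤_wRK I_{ω^{α+1}}`. -/
theorem Iomega_wRK_le (α : Ordinal) (hcount : α.card ≤ Cardinal.aleph0) :
    wRK (Ialpha Ordinal.omega0) (Ialpha (Ordinal.omega0 ^ (α + 1))) := by
  rw [opow_add_one]
  exact Iomega.wRK_Ialpha_omega0_mul_omega0 (opow_pos α omega0_pos)
    ((card_opow_le ω α).trans (by simp [hcount]))
end

section
/- ℓ₁ is not weak Rudin–Keisler reducible to I_ω: there is no infinite set A ⊆ 2^{<ω} and function f : A → ℕ such that for every X ⊆ ℕ, X ∈ ℓ₁ if and only if f⁻¹[X] ∈ I_ω. -/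
/-!
Suppose `f` reduces `ℓ₁` to `I_ω` on `B ⊆ 2^{<ω}`. Membership in `I_ω` amounts to every point
having a finite bound on the sizes of ⪯-chains above it. Since `ℕ ∉ ℓ₁`, some `s₀ ∈ B` has
arbitrarily large chains above it, while for every finite `L ∋ f s₀` the chains above `s₀` inside
`f⁻¹[L]` are bounded. So for each `k` there is a chain `C_k` of size `k` above `s₀` whose values are
all at least `2^k k`; then `f[C_k]` has `ℓ₁`-weight at most `2^{-k}`, and
`X = {f s₀} ∪ ⋃ₖ f[C_k] ∈ ℓ₁` although `f⁻¹[X]` carries chains of every size above `s₀`.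
-/

open Set
open scoped ENNReal

section Chains

def chainsAbove (Z : Set (List Bool)) (s : List Bool) : Set (Finset (List Bool)) :=
  {C | ↑C ⊆ Z ∧ IsChain (· <+: ·) (C : Set (List Bool)) ∧ ∀ t ∈ C, s <+: t}

variable {Z W : Set (List Bool)} {s t : List Bool} {C D : Finset (List Bool)}

lemma chainsAbove_of_subset (hC : C ∈ chainsAbove Z s) (hDC : D ⊆ C) (hDW : ↑D ⊆ W) :
    D ∈ chainsAbove W s :=
  ⟨hDW, hC.2.1.mono (Finset.coe_subset.2 hDC), fun t ht => hC.2.2 t (hDC ht)⟩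

lemma insert_mem_chainsAbove (hC : C ∈ chainsAbove Z t) (hs : s ∈ Z) (hst : s <+: t) :
    insert s C ∈ chainsAbove Z s := by
  obtain ⟨hCZ, hchain, habove⟩ := hC
  refine ⟨?_, ?_, ?_⟩
  · rw [Finset.coe_insert]
    exact insert_subset hs hCZ
  · rw [Finset.coe_insert]
    exact hchain.insert fun u hu _ => Or.inl (hst.trans (habove u hu))
  · intro u hu
    rcases Finset.mem_insert.1 hu with rfl | hu
    · exact List.prefix_refl u
    · exact hst.trans (habove u hu)

lemma mem_Ialpha_omega0_iff :
    Z ∈ Ialpha Ordinal.omega0 ↔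
      ∃ g : List Bool → ℕ, ∀ s ∈ Z, ∀ t ∈ Z, s <+: t → s ≠ t → g t < g s := by
  constructor
  · rintro ⟨g, hlt, hdec⟩
    choose! n hn using fun s hs => Ordinal.lt_omega0.1 (hlt s hs)
    refine ⟨n, fun s hs t ht hst hne => ?_⟩
    have := hdec s hs t ht hst hne
    rwa [hn s hs, hn t ht, Nat.cast_lt] at this
  · rintro ⟨g, hdec⟩
    exact ⟨fun s => g s, fun s _ => Ordinal.natCast_lt_omega0 _,
      fun s hs t ht hst hne => Nat.cast_lt.2 (hdec s hs t ht hst hne)⟩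

lemma card_le_of_mem_chainsAbove {g : List Bool → ℕ}
    (hg : ∀ s ∈ Z, ∀ t ∈ Z, s <+: t → s ≠ t → g t < g s) (hs : s ∈ Z)
    (hC : C ∈ chainsAbove Z s) : C.card ≤ g s + 1 := by
  obtain ⟨hCZ, hchain, habove⟩ := hC
  have hmaps : MapsTo g C (Finset.range (g s + 1)) := by
    intro t ht
    rw [Finset.coe_range, mem_Iio, Nat.lt_succ_iff]
    rcases eq_or_ne s t with rfl | hne
    · exact le_rfl
    · exact (hg s hs t (hCZ ht) (habove t ht) hne).le
  have hinj : InjOn g C := by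
    intro t ht u hu hgtu
    by_contra hne
    rcases hchain ht hu hne with htu | hut
    · exact (hg t (hCZ ht) u (hCZ hu) htu hne).ne' hgtu
    · exact (hg u (hCZ hu) t (hCZ ht) hut (Ne.symm hne)).ne hgtu
  simpa using Finset.card_le_card_of_injOn g hmaps hinj

lemma mem_Ialpha_omega0_iff_bddAbove :
    Z ∈ Ialpha Ordinal.omega0 ↔ ∀ s ∈ Z, BddAbove (Finset.card '' chainsAbove Z s) := by
  rw [mem_Ialpha_omega0_iff]
  constructor
  · rintro ⟨g, hg⟩ s hs
    exact ⟨g s + 1, forall_mem_image.2 fun C hC => card_le_of_mem_chainsAbove hg hs hC⟩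
  · intro hbdd
    refine ⟨fun s => sSup (Finset.card '' chainsAbove Z s), fun s hs t ht hst hne => ?_⟩
    have hempty : ∅ ∈ chainsAbove Z t := ⟨by simp, by simp, by simp⟩
    obtain ⟨C, hC, hCcard⟩ := Nat.sSup_mem ⟨_, mem_image_of_mem _ hempty⟩ (hbdd t ht)
    have hsC : s ∉ C := fun hsC =>
      hne (List.IsPrefix.eq_of_length hst (le_antisymm hst.length_le (hC.2.2 s hsC).length_le))
    have := le_csSup (hbdd s hs) (mem_image_of_mem _ (insert_mem_chainsAbove hC hs hst))
    rw [Finset.card_insert_of_notMem hsC, hCcard] at this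
    exact this

lemma exists_mem_chainsAbove_diff (hZ : ¬BddAbove (Finset.card '' chainsAbove Z s))
    (hW : BddAbove (Finset.card '' chainsAbove W s)) (k : ℕ) :
    ∃ C ∈ chainsAbove (Z \ W) s, C.card = k := by
  classical
  obtain ⟨b, hb⟩ := hW
  obtain ⟨_, ⟨C, hC, rfl⟩, hCcard⟩ := not_bddAbove_iff.1 hZ (b + k)
  have hin : (C.filter (· ∈ W)).card ≤ b :=
    hb ⟨_, chainsAbove_of_subset hC (Finset.filter_subset _ _)
      fun t ht => (Finset.mem_filter.1 ht).2, rfl⟩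
  have hout : k ≤ (C.filter (· ∉ W)).card := by
    have := Finset.card_filter_add_card_filter_not (s := C) (· ∈ W)
    omega
  obtain ⟨D, hD, hDcard⟩ := Finset.exists_subset_card_eq hout
  refine ⟨D, chainsAbove_of_subset hC (hD.trans (Finset.filter_subset _ _)) ?_, hDcard⟩
  intro t ht
  have := Finset.mem_filter.1 (hD ht)
  exact ⟨hC.1 this.1, this.2⟩

end Chains

lemma mem_ell1_iff {X : Set ℕ} : X ∈ ell1 ↔ ∑' n : X, ((n : ℝ≥0∞) + 1)⁻¹ ≠ ∞ := by
  have h : ∀ n : ℕ, ((n : ℝ≥0∞) + 1)⁻¹ = (((n : NNReal) + 1)⁻¹ : NNReal) := fun n => by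
    rw [ENNReal.coe_inv (by positivity)]
    push_cast
    rfl
  simp only [h, ENNReal.tsum_coe_ne_top_iff_summable_coe, ell1, mem_ofPred_eq]
  push_cast
  simp [one_div]

lemma univ_notMem_ell1 : (univ : Set ℕ) ∉ ell1 := by
  intro h
  have h' : Summable fun n : ℕ => (1 : ℝ) / ((n : ℝ) + 1) :=
    h.comp_injective (i := fun n : ℕ => (⟨n, trivial⟩ : (univ : Set ℕ)))
      fun _ _ hab => congrArg Subtype.val hab
  refine Real.not_summable_one_div_natCast ((summable_nat_add_iff 1).1 ?_)
  exact_mod_cast h'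

lemma mem_ell1_of_finite {X : Set ℕ} (hX : X.Finite) : X ∈ ell1 :=
  have : Finite X := hX
  Summable.of_finite

lemma union_mem_ell1 {X Y : Set ℕ} (hX : X ∈ ell1) (hY : Y ∈ ell1) : X ∪ Y ∈ ell1 := by
  rw [mem_ell1_iff] at *
  exact ne_top_of_le_ne_top (ENNReal.add_ne_top.2 ⟨hX, hY⟩)
    (ENNReal.tsum_union_le (fun n : ℕ => ((n : ℝ≥0∞) + 1)⁻¹) X Y)

lemma sum_inv_add_one_le {G : Finset ℕ} {k : ℕ} (hcard : G.card ≤ k)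
    (hlarge : ∀ v ∈ G, 2 ^ k * k ≤ v) : ∑ v ∈ G, ((v : ℝ≥0∞) + 1)⁻¹ ≤ 2⁻¹ ^ k := by
  rcases Nat.eq_zero_or_pos k with rfl | hk
  · simp [Finset.card_eq_zero.1 (Nat.le_zero.1 hcard)]
  have hterm : ∀ v ∈ G, ((v : ℝ≥0∞) + 1)⁻¹ ≤ ((2 ^ k * k : ℕ) : ℝ≥0∞)⁻¹ := fun v hv => by
    refine ENNReal.inv_le_inv.2 ?_
    exact_mod_cast (hlarge v hv).trans (Nat.le_succ v)
  calc ∑ v ∈ G, ((v : ℝ≥0∞) + 1)⁻¹ ≤ G.card * ((2 ^ k * k : ℕ) : ℝ≥0∞)⁻¹ := by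
        simpa using Finset.sum_le_card_nsmul _ _ _ hterm
    _ ≤ k * ((2 ^ k * k : ℕ) : ℝ≥0∞)⁻¹ := by gcongr
    _ = 2⁻¹ ^ k := by
        push_cast
        rw [ENNReal.mul_inv (by simp) (by simp), mul_left_comm, ENNReal.mul_inv_cancel
          (by exact_mod_cast hk.ne') (by simp), mul_one, ENNReal.inv_pow]

lemma iUnion_mem_ell1 {G : ℕ → Finset ℕ} (hcard : ∀ k, (G k).card ≤ k)
    (hlarge : ∀ k, ∀ v ∈ G k, 2 ^ k * k ≤ v) : ⋃ k, (G k : Set ℕ) ∈ ell1 := by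
  rw [mem_ell1_iff]
  have hG : ∀ k, ∑' v : (G k : Set ℕ), ((v : ℝ≥0∞) + 1)⁻¹ ≤ 2⁻¹ ^ k := fun k => by
    rw [Finset.tsum_subtype' (G k) fun v : ℕ => ((v : ℝ≥0∞) + 1)⁻¹]
    exact sum_inv_add_one_le (hcard k) (hlarge k)
  refine ne_top_of_le_ne_top ?_ ((ENNReal.tsum_iUnion_le_tsum
    (fun n : ℕ => ((n : ℝ≥0∞) + 1)⁻¹) _).trans (ENNReal.tsum_le_tsum hG))
  simp [ENNReal.tsum_geometric, ENNReal.one_sub_inv_two]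

theorem not_forall_mem_ell1_iff_inter_preimage_mem_Ialpha (B : Set (List Bool))
    (F : List Bool → ℕ) :
    ¬∀ X : Set ℕ, X ∈ ell1 ↔ B ∩ F ⁻¹' X ∈ Ialpha Ordinal.omega0 := by
  intro hred
  have hbdd : ∀ X ∈ ell1, ∀ s ∈ B, F s ∈ X →
      BddAbove (Finset.card '' chainsAbove (B ∩ F ⁻¹' X) s) := fun X hX s hs hsX =>
    mem_Ialpha_omega0_iff_bddAbove.1 ((hred X).1 hX) s ⟨hs, hsX⟩
  obtain ⟨s₀, hs₀, hunb⟩ : ∃ s ∈ B, ¬BddAbove (Finset.card '' chainsAbove B s) := by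
    have hB := (hred univ).not.1 univ_notMem_ell1
    rw [preimage_univ, inter_univ, mem_Ialpha_omega0_iff_bddAbove] at hB
    simpa only [not_forall, exists_prop] using hB
  have hchain : ∀ k, ∃ C ∈ chainsAbove B s₀, C.card = k ∧ ∀ t ∈ C, 2 ^ k * k ≤ F t := by
    intro k
    have hsmall := hbdd _ (mem_ell1_of_finite ((finite_Iio (2 ^ k * k)).insert (F s₀))) s₀ hs₀
      (mem_insert _ _)
    obtain ⟨C, hC, hCcard⟩ := exists_mem_chainsAbove_diff hunb hsmall k
    refine ⟨C, chainsAbove_of_subset hC subset_rfl fun t ht => (hC.1 ht).1, hCcard,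
      fun t ht => ?_⟩
    have := (hC.1 ht).2
    simp only [mem_inter_iff, mem_preimage, mem_insert_iff, mem_Iio, not_and] at this
    exact not_lt.1 fun h => this (hC.1 ht).1 (Or.inr h)
  choose C hC hcard hlarge using hchain
  set X := {F s₀} ∪ ⋃ k, ((C k).image F : Set ℕ)
  have hX : X ∈ ell1 := by
    refine union_mem_ell1 (mem_ell1_of_finite (finite_singleton _)) (iUnion_mem_ell1
      (fun k => Finset.card_image_le.trans (hcard k).le) fun k => ?_)
    simpa using hlarge k
  obtain ⟨b, hb⟩ := hbdd X hX s₀ hs₀ (mem_union_left _ rfl)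
  have hCX : C (b + 1) ∈ chainsAbove (B ∩ F ⁻¹' X) s₀ :=
    chainsAbove_of_subset (hC _) subset_rfl fun t ht =>
      ⟨(hC _).1 ht, Or.inr (mem_iUnion.2 ⟨b + 1, Finset.mem_image_of_mem F ht⟩)⟩
  have := hb (mem_image_of_mem _ hCX)
  rw [hcard] at this
  omega

/-- `ℓ₁` is not weak Rudin–Keisler reducible to `I_ω`. -/
theorem ell1_not_wRK_Iomega : ¬ wRK ell1 (Ialpha Ordinal.omega0) := by
  rintro ⟨B, f, -, hred⟩
  classical
  refine not_forall_mem_ell1_iff_inter_preimage_mem_Ialpha B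
    (fun t => if h : t ∈ B then f ⟨t, h⟩ else 0) fun X => ?_
  convert hred X using 2
  ext t
  constructor
  · rintro ⟨ht, htX⟩
    exact ⟨⟨t, ht⟩, by simpa [ht] using htX, rfl⟩
  · rintro ⟨⟨t, ht⟩, htX, rfl⟩
    exact ⟨ht, by simpa [ht] using htX⟩
end

section
/- I_ω is not weak Rudin–Keisler reducible to I_wf: there is no infinite set A ⊆ 2^{<ω} and function f : A → 2^{<ω} such that for every X ⊆ 2^{<ω}, X ∈ I_ω if and only if f⁻¹[X] ∈ I_wf. -/
/-- auxiliary string: `0^n 1 0^k`. -/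
def bstr (n k : ℕ) : List Bool := List.replicate n false ++ true :: List.replicate k false

/-- auxiliary set: union over `n` of a chain of length `n+1` located at `0^n 1`. -/
def X1 : Set (List Bool) := {s | ∃ n k, k ≤ n ∧ s = bstr n k}

/-- number of leading `false`s. -/
def leadF : List Bool → ℕ
  | [] => 0
  | true :: _ => 0
  | false :: l => leadF l + 1

lemma leadF_app (n : ℕ) (l : List Bool) :
    leadF (List.replicate n false ++ true :: l) = n := by
  induction n with
  | zero => simp [leadF]
  | succ n ih => simp [List.replicate_succ, leadF, ih]

lemma bstr_length (n k : ℕ) : (bstr n k).length = n + 1 + k := by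
  simp [bstr]; omega

lemma bstr_prefix {n k n' k' : ℕ} (h : bstr n k <+: bstr n' k')
    (hne : bstr n k ≠ bstr n' k') : n = n' ∧ k < k' := by
  obtain ⟨t, ht⟩ := h
  have hn : n = n' := by
    have ht' : List.replicate n false ++ true :: (List.replicate k false ++ t)
        = List.replicate n' false ++ true :: List.replicate k' false := by
      simpa [bstr, List.append_assoc, List.cons_append] using ht
    have := congrArg leadF ht'
    simpa [leadF_app] using this
  subst hn
  have hl : (bstr n k).length + t.length = (bstr n k').length := by
    rw [← ht]; simp
  rw [bstr_length, bstr_length] at hl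
  rcases Nat.eq_zero_or_pos t.length with h0 | h0
  · exfalso
    have : t = [] := List.length_eq_zero_iff.mp h0
    subst this
    simp at ht
    exact hne ht
  · constructor
    · rfl
    · omega

lemma X1_mem : X1 ∈ Ialpha Ordinal.omega0 := by
  refine ⟨fun s => (((2 * leadF s + 1) - s.length : ℕ) : Ordinal),
    fun s _ => Ordinal.nat_lt_omega0 _, ?_⟩
  rintro s ⟨n, k, hk, rfl⟩ t ⟨n', k', hk', rfl⟩ hpre hne
  obtain ⟨rfl, hkk⟩ := bstr_prefix hpre hne
  have e1 : leadF (bstr n k) = n := leadF_app n _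
  have e2 : leadF (bstr n k') = n := leadF_app n _
  simp only [e1, e2, bstr_length]
  have : 2 * n + 1 - (n + 1 + k') < 2 * n + 1 - (n + 1 + k) := by omega
  exact_mod_cast this

lemma nil_mem : ({[]} : Set (List Bool)) ∈ Ialpha Ordinal.omega0 := by
  refine ⟨fun _ => 0, fun s _ => ?_, ?_⟩
  · exact Ordinal.nat_lt_omega0 0
  · rintro s rfl t rfl _ hne
    exact absurd rfl hne

lemma bstr_ne_nil (n k : ℕ) : bstr n k ≠ [] := by
  intro h
  have := congrArg List.length h
  rw [bstr_length] at this
  simp at this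

lemma X0_notMem : (insert [] X1) ∉ Ialpha Ordinal.omega0 := by
  rintro ⟨F, hlt, hdec⟩
  have hnil : ([] : List Bool) ∈ insert [] X1 := Set.mem_insert _ _
  obtain ⟨m, hm⟩ := (Ordinal.lt_omega0).mp (hlt [] hnil)
  have hb : ∀ k, k ≤ m → bstr m k ∈ insert ([] : List Bool) X1 :=
    fun k hk => Set.mem_insert_of_mem _ ⟨m, k, hk, rfl⟩
  have key : ∀ k, k ≤ m → ∀ j : ℕ, F (bstr m k) = (j : Ordinal) → j + k < m := by
    intro k
    induction k with
    | zero =>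
      intro hk j hj
      have h1 : F (bstr m 0) < F [] :=
        hdec [] hnil _ (hb 0 hk) List.nil_prefix (fun h => bstr_ne_nil m 0 h.symm)
      rw [hm, hj] at h1
      have : j < m := by exact_mod_cast h1
      omega
    | succ k ih =>
      intro hk j hj
      have hkm : k ≤ m := Nat.le_of_succ_le hk
      obtain ⟨j', hj'⟩ := (Ordinal.lt_omega0).mp (hlt _ (hb k hkm))
      have hpre : bstr m k <+: bstr m (k + 1) := by
        refine ⟨[false], ?_⟩
        simp [bstr, List.replicate_succ' (n := k)]
      have hne : bstr m k ≠ bstr m (k + 1) := by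
        intro h
        have := congrArg List.length h
        rw [bstr_length, bstr_length] at this
        omega
      have h2 : F (bstr m (k + 1)) < F (bstr m k) :=
        hdec _ (hb k hkm) _ (hb (k + 1) hk) hpre hne
      rw [hj, hj'] at h2
      have hjj : j < j' := by exact_mod_cast h2
      have := ih hkm j' hj'
      omega
  obtain ⟨j, hj⟩ := (Ordinal.lt_omega0).mp (hlt _ (hb m le_rfl))
  have := key m le_rfl j hj
  omega

lemma branches_union {A B : Set (List Bool)} (hA : branches A = ∅)
    (hB : branches B = ∅) : branches (A ∪ B) = ∅ := by
  rw [Set.eq_empty_iff_forall_notMem] at *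
  intro y hy
  have hA' := hA y
  have hB' := hB y
  simp only [branches, Set.mem_setOf_eq] at hy hA' hB'
  push_neg at hA' hB'
  obtain ⟨N₁, h1⟩ := hA'
  obtain ⟨N₂, h2⟩ := hB'
  obtain ⟨n, hn, hmem⟩ := hy (max N₁ N₂)
  rcases hmem with h | h
  · exact h1 n (le_trans (le_max_left _ _) hn) h
  · exact h2 n (le_trans (le_max_right _ _) hn) h

/-- `I_ω` is not weak Rudin–Keisler reducible to `I_wf`. -/
theorem Iomega_not_wRK_Iwf : ¬ wRK (Ialpha Ordinal.omega0) Iwf := by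
  rintro ⟨B', f, -, h⟩
  have h1 : branches (Subtype.val '' (f ⁻¹' X1)) = ∅ := (h X1).mp X1_mem
  have h2 : branches (Subtype.val '' (f ⁻¹' {[]})) = ∅ := (h {[]}).mp nil_mem
  apply X0_notMem
  rw [h]
  have e : (f ⁻¹' insert ([] : List Bool) X1) = f ⁻¹' {[]} ∪ f ⁻¹' X1 := by
    rw [Set.insert_eq, Set.preimage_union]
  show branches _ = ∅
  rw [e, Set.image_union]
  exact branches_union h2 h1
end

section
/- If I and J are ideals on countable sets A and B respectively and I ≤_wRK J, then (I, ⊆) is Tukey-reducible to (J, ⊆). -/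
/-- A weak Rudin–Keisler reduction between ideals on countable sets yields a Tukey
reduction of the ideals ordered by inclusion. -/
theorem wRK_implies_Tukey (A B : Type) [Countable A] [Countable B]
    (I : Set (Set A)) (J : Set (Set B)) (hI : IsIdeal I) (hJ : IsIdeal J)
    (h : wRK I J) : TukeyLE {X // X ∈ I} {Y // Y ∈ J} := by
  obtain ⟨B', f, -, hiff⟩ := h
  refine ⟨fun X => ⟨Subtype.val '' (f ⁻¹' X.1), (hiff X.1).1 X.2⟩, ?_⟩
  intro S hS
  rintro ⟨b, hb⟩
  apply hS
  set Y : Set A := {a | Subtype.val '' (f ⁻¹' {a}) ⊆ b.1} with hY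
  have hYI : Y ∈ I := by
    refine (hiff Y).2 (hJ.2.1 b.1 b.2 _ ?_)
    rintro x ⟨y, hy, rfl⟩
    exact hy ⟨y, rfl, rfl⟩
  refine ⟨⟨Y, hYI⟩, ?_⟩
  rintro ⟨X, hX⟩ hXS a ha
  intro z hz
  obtain ⟨y, hy, rfl⟩ := hz
  exact hb _ ⟨⟨X, hX⟩, hXS, rfl⟩ ⟨y, show f y ∈ X from hy ▸ ha, rfl⟩
end

section
/- There exists a lower semicontinuous submeasure φ_max on P(ℕ) such that for every lower semicontinuous submeasure π on P(ℕ), Exh(π) ≤_wRK Exh(φ_max). -/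
open scoped ENNReal

/-- A submeasure on `P(ℕ)`. -/
def IsSubmeasure (φ : Set ℕ → ℝ≥0∞) : Prop :=
  φ ∅ = 0 ∧ (∀ X Y : Set ℕ, X ⊆ Y → φ X ≤ φ Y) ∧ ∀ X Y : Set ℕ, φ (X ∪ Y) ≤ φ X + φ Y

/-- Lower semicontinuity: `φ(X) = lim_n φ(X ∩ {0,…,n-1})`. -/
def IsLSCSubmeasure (φ : Set ℕ → ℝ≥0∞) : Prop :=
  ∀ X : Set ℕ, Filter.Tendsto (fun n => φ (X ∩ {k | k < n})) Filter.atTop (nhds (φ X))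

/-- The exhaustive ideal of a submeasure. -/
def Exh (φ : Set ℕ → ℝ≥0∞) : Set (Set ℕ) :=
  {X | ∀ ε : ℝ≥0∞, 0 < ε → ∃ F : Finset ℕ, φ (X \ (F : Set ℕ)) < ε}

/-!
Dyadic approximations of submeasures form a countable tree: a node of level `k` is a submeasure
on the subsets of `[0, k)` with values in `2^(-k) ℕ`, and its children are the nodes of level
`k + 1` exceeding it by at most `2^(-k-1)` on the subsets of `[0, k)`. Code the finite paths of
the tree by natural numbers and let `φ_max(Z)` be the supremum, over all paths `s`, of the last
node of `s` evaluated at the set of depths `i` at which the initial segment of `s` of length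
`i + 1` has its code in `Z`. An lsc submeasure `π`, capped at `1`, determines a branch of this
tree, and sending `i` to the code of the initial segment of length `i + 1` of the branch reduces
`Exh π` to `Exh φ_max`: along the branch `φ_max` recovers `π` by lower semicontinuity, and a
path leaving the branch exceeds its last node on the branch by at most a geometric tail.
-/

open scoped NNReal

section Submeasure

variable {ι : Type*} {ψ : ι → Set ℕ → ℝ≥0∞}

theorem isSubmeasure_iSup (h : ∀ i, IsSubmeasure (ψ i)) : IsSubmeasure fun Z => ⨆ i, ψ i Z := by
  refine ⟨by simp [fun i => (h i).1], fun X Y hXY => iSup_mono fun i => (h i).2.1 X Y hXY,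
    fun X Y => iSup_le fun i => ?_⟩
  exact ((h i).2.2 X Y).trans (add_le_add (le_iSup (ψ · X) i) (le_iSup (ψ · Y) i))

theorem isLSCSubmeasure_iSup (hmono : ∀ i, Monotone (ψ i))
    (hlocal : ∀ i Z, ∃ N, ψ i Z ≤ ψ i (Z ∩ {k | k < N})) :
    IsLSCSubmeasure fun Z => ⨆ i, ψ i Z := by
  intro Z
  have hmono' : Monotone fun n => ⨆ i, ψ i (Z ∩ {k | k < n}) := fun m n hmn =>
    iSup_mono fun i => hmono i (Set.inter_subset_inter_right _ fun k hk => lt_of_lt_of_le hk hmn)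
  have hsup : ⨆ n, ⨆ i, ψ i (Z ∩ {k | k < n}) = ⨆ i, ψ i Z := by
    refine le_antisymm (iSup_le fun n => iSup_mono fun i => hmono i Set.inter_subset_left)
      (iSup_le fun i => ?_)
    obtain ⟨N, hN⟩ := hlocal i Z
    exact hN.trans ((le_iSup (ψ · (Z ∩ {k | k < N})) i).trans (le_iSup_of_le N le_rfl))
  beta_reduce
  rw [← hsup]
  exact tendsto_atTop_iSup hmono'

variable {π : Set ℕ → ℝ≥0∞}

theorem IsSubmeasure.min_one (h : IsSubmeasure π) : IsSubmeasure fun Z => min (π Z) 1 := by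
  refine ⟨by simp [h.1], fun X Y hXY => min_le_min_right 1 (h.2.1 X Y hXY), fun X Y => ?_⟩
  rcases le_total 1 (π X) with hX | hX
  · exact (min_le_right _ _).trans (by simp [hX])
  rcases le_total 1 (π Y) with hY | hY
  · exact (min_le_right _ _).trans (by simp [hY])
  beta_reduce
  rw [min_eq_left hX, min_eq_left hY]
  exact (min_le_left _ _).trans (h.2.2 X Y)

theorem IsLSCSubmeasure.min_one (h : IsLSCSubmeasure π) :
    IsLSCSubmeasure fun Z => min (π Z) 1 :=
  fun X => (h X).min tendsto_const_nhds

theorem exh_min_one (π : Set ℕ → ℝ≥0∞) : Exh (fun Z => min (π Z) 1) = Exh π := by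
  ext X
  refine ⟨fun hX ε hε => ?_, fun hX ε hε => ?_⟩
  · obtain ⟨F, hF⟩ := hX (min ε 1) (lt_min hε one_pos)
    have hlt : π (X \ F) < 1 := by
      by_contra! h
      exact (hF.trans_le (min_le_right _ _)).ne (min_eq_right h)
    exact ⟨F, (min_eq_left hlt.le).symm.trans_lt hF |>.trans_le (min_le_left _ _)⟩
  · obtain ⟨F, hF⟩ := hX ε hε
    exact ⟨F, (min_le_left _ _).trans_lt hF⟩

end Submeasure

theorem wRK_of_injective {A B : Type*} [Infinite A] {I : Set (Set A)} {J : Set (Set B)}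
    {g : A → B} (hg : Function.Injective g) (h : ∀ X, X ∈ I ↔ g '' X ∈ J) : wRK I J := by
  refine ⟨Set.range g, (Equiv.ofInjective g hg).symm, Set.infinite_range_of_injective hg,
    fun X => ?_⟩
  rw [← Equiv.image_eq_preimage_symm, Set.image_image]
  simpa only [Equiv.ofInjective_apply] using h X

noncomputable section

namespace WRKComplete

open Finset

theorem inv_two_pow_succ_add_self (k : ℕ) : (2⁻¹ : ℝ≥0∞) ^ (k + 1) + 2⁻¹ ^ (k + 1) = 2⁻¹ ^ k := by
  rw [pow_succ, ← mul_add, ENNReal.inv_two_add_inv_two, mul_one]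

section Dyadic

/-- The junk value at `x = ⊤` is `0`. -/
def dyadicCeil (k : ℕ) (x : ℝ≥0∞) : ℕ := ⌈x.toNNReal * 2 ^ k⌉₊

variable {k : ℕ} {x y z : ℝ≥0∞}

theorem le_dyadicCeil_div (hx : x ≠ ⊤) : x ≤ dyadicCeil k x / 2 ^ k := by
  rw [ENNReal.le_div_iff_mul_le (by simp) (by simp)]
  have h : x.toNNReal * 2 ^ k ≤ (dyadicCeil k x : ℝ≥0) := Nat.le_ceil _
  calc x * 2 ^ k = ((x.toNNReal * 2 ^ k : ℝ≥0) : ℝ≥0∞) := by simp [hx]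
    _ ≤ dyadicCeil k x := by exact_mod_cast h

theorem dyadicCeil_div_le : (dyadicCeil k x : ℝ≥0∞) / 2 ^ k ≤ x + 2⁻¹ ^ k := by
  rcases eq_or_ne x ⊤ with rfl | hx
  · simp
  rw [ENNReal.div_le_iff_le_mul (by simp) (by simp), add_mul, ← ENNReal.inv_pow,
    ENNReal.inv_mul_cancel (by simp) (by simp)]
  have h : (dyadicCeil k x : ℝ≥0) ≤ x.toNNReal * 2 ^ k + 1 :=
    (Nat.ceil_lt_add_one zero_le).le
  calc (dyadicCeil k x : ℝ≥0∞) ≤ ((x.toNNReal * 2 ^ k + 1 : ℝ≥0) : ℝ≥0∞) := by exact_mod_cast h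
    _ = x * 2 ^ k + 1 := by simp [hx]

theorem dyadicCeil_mono (hy : y ≠ ⊤) (h : x ≤ y) : dyadicCeil k x ≤ dyadicCeil k y :=
  Nat.ceil_mono (mul_le_mul_left (ENNReal.toNNReal_mono hy h) _)

theorem dyadicCeil_le_add (hy : y ≠ ⊤) (hz : z ≠ ⊤) (h : x ≤ y + z) :
    dyadicCeil k x ≤ dyadicCeil k y + dyadicCeil k z := by
  calc dyadicCeil k x ≤ dyadicCeil k (y + z) := dyadicCeil_mono (by simp [hy, hz]) h
    _ ≤ dyadicCeil k y + dyadicCeil k z := by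
      rw [dyadicCeil, ENNReal.toNNReal_add hy hz, add_mul]
      exact Nat.ceil_add_le _ _

end Dyadic

/-- A node `(k, c)` stands for the submeasure `A ↦ c (A ∩ [0, k)) / 2^k` on finite sets. -/
abbrev Node : Type := ℕ × (Finset ℕ →₀ ℕ)

def eval (v : Node) (A : Finset ℕ) : ℝ≥0∞ := v.2 (A ∩ range v.1) / 2 ^ v.1

def IsFinsetSubmeasure (μ : Finset ℕ → ℝ≥0∞) : Prop :=
  μ ∅ = 0 ∧ Monotone μ ∧ ∀ A B, μ (A ∪ B) ≤ μ A + μ B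

/-- `v` is a child of `u`. Paths of the tree are lists of nodes, deepest node first. -/
def Coherent (v u : Node) : Prop :=
  v.1 = u.1 + 1 ∧ ∀ A ⊆ range u.1, eval v A ≤ eval u A + 2⁻¹ ^ v.1

theorem eval_add_le_of_isSuffix {v u : Node} {older t : List Node}
    (hc : (v :: older).IsChain Coherent) (hs : u :: t <:+ v :: older) {A : Finset ℕ}
    (hA : A ⊆ range u.1) : u.1 ≤ v.1 ∧ eval v A + 2⁻¹ ^ v.1 ≤ eval u A + 2⁻¹ ^ u.1 := by
  rcases List.suffix_cons_iff.mp hs with h | h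
  · obtain rfl := (List.cons_eq_cons.mp h).1
    exact ⟨le_rfl, le_rfl⟩
  obtain _ | ⟨w, rest⟩ := older
  · simp at h
  rw [List.isChain_cons_cons] at hc
  obtain ⟨⟨hvw, hcoh⟩, hc⟩ := hc
  obtain ⟨huw, hw⟩ := eval_add_le_of_isSuffix hc h hA
  refine ⟨by omega, ?_⟩
  calc eval v A + 2⁻¹ ^ v.1 ≤ eval w A + 2⁻¹ ^ v.1 + 2⁻¹ ^ v.1 := by
        gcongr
        exact hcoh A (hA.trans (range_subset_range.mpr huw))
    _ = eval w A + 2⁻¹ ^ w.1 := by rw [add_assoc, hvw, inv_two_pow_succ_add_self]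
    _ ≤ eval u A + 2⁻¹ ^ u.1 := hw

section Approximation

variable {ψ : Set ℕ → ℝ≥0∞}

def dyadicNode (ψ : Set ℕ → ℝ≥0∞) (k : ℕ) : Node :=
  (k, Finsupp.indicator (range k).powerset fun A _ => dyadicCeil k (ψ A))

theorem eval_dyadicNode (k : ℕ) (A : Finset ℕ) :
    eval (dyadicNode ψ k) A = dyadicCeil k (ψ ↑(A ∩ range k)) / 2 ^ k := by
  rw [eval, dyadicNode, Finsupp.indicator_of_mem (mem_powerset.mpr inter_subset_right)]

theorem isFinsetSubmeasure_eval_dyadicNode (hψ : IsSubmeasure ψ) (hfin : ∀ Z, ψ Z ≠ ⊤)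
    (k : ℕ) : IsFinsetSubmeasure (eval (dyadicNode ψ k)) := by
  refine ⟨?_, fun A B hAB => ?_, fun A B => ?_⟩
  · simp [eval_dyadicNode, dyadicCeil, hψ.1]
  · simp only [eval_dyadicNode]
    gcongr
    exact dyadicCeil_mono (hfin _) (hψ.2.1 _ _ (by gcongr))
  · rw [eval_dyadicNode, eval_dyadicNode, eval_dyadicNode, ← ENNReal.add_div,
      union_inter_distrib_right, coe_union]
    refine ENNReal.div_le_div_right ?_ _
    rw [← Nat.cast_add]
    exact Nat.cast_le.mpr (dyadicCeil_le_add (hfin _) (hfin _) (hψ.2.2 _ _))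

theorem le_eval_dyadicNode (hfin : ∀ Z, ψ Z ≠ ⊤) {k : ℕ} {A : Finset ℕ} (hA : A ⊆ range k) :
    ψ A ≤ eval (dyadicNode ψ k) A := by
  rw [eval_dyadicNode, inter_eq_left.mpr hA]
  exact le_dyadicCeil_div (hfin _)

theorem eval_dyadicNode_le {k : ℕ} {A : Finset ℕ} (hA : A ⊆ range k) :
    eval (dyadicNode ψ k) A ≤ ψ A + 2⁻¹ ^ k := by
  rw [eval_dyadicNode, inter_eq_left.mpr hA]
  exact dyadicCeil_div_le

theorem coherent_dyadicNode (hfin : ∀ Z, ψ Z ≠ ⊤) (k : ℕ) :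
    Coherent (dyadicNode ψ (k + 1)) (dyadicNode ψ k) :=
  ⟨rfl, fun _ hA => (eval_dyadicNode_le (hA.trans (range_subset_range.mpr k.le_succ))).trans
    (add_le_add (le_eval_dyadicNode hfin hA) le_rfl)⟩

def branch (ψ : Set ℕ → ℝ≥0∞) : ℕ → List Node
  | 0 => []
  | n + 1 => dyadicNode ψ (n + 1) :: branch ψ n

@[simp]
theorem length_branch (n : ℕ) : (branch ψ n).length = n := by
  induction n with
  | zero => rfl
  | succ n ih => simp [branch, ih]

theorem isChain_branch (hfin : ∀ Z, ψ Z ≠ ⊤) : ∀ n, (branch ψ n).IsChain Coherent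
  | 0 => .nil
  | 1 => .singleton _
  | n + 2 =>
    List.isChain_cons_cons.mpr ⟨coherent_dyadicNode hfin (n + 1), isChain_branch hfin (n + 1)⟩

end Approximation

def code : List Node → ℕ := (Countable.exists_injective_nat (List Node)).choose

theorem code_injective : Function.Injective code :=
  (Countable.exists_injective_nat (List Node)).choose_spec

open Classical in
/-- The depths `i` at which the initial segment of length `i + 1` of the path `p` (a suffix of
the list `p`) has its code in `Z`. -/
def trace (Z : Set ℕ) : List Node → Finset ℕ
  | [] => ∅
  | v :: older =>
    if code (v :: older) ∈ Z then insert older.length (trace Z older) else trace Z older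

theorem mem_trace {Z : Set ℕ} {p : List Node} {i : ℕ} :
    i ∈ trace Z p ↔ ∃ t, t <:+ p ∧ t.length = i + 1 ∧ code t ∈ Z := by
  induction p with
  | nil => simp [trace]
  | cons v older ih =>
    simp only [trace, List.suffix_cons_iff]
    split_ifs <;> aesop

theorem trace_mono {Z Z' : Set ℕ} (h : Z ⊆ Z') (p : List Node) : trace Z p ⊆ trace Z' p :=
  fun i hi => by
    obtain ⟨t, ht, hlen, hZ⟩ := mem_trace.mp hi
    exact mem_trace.mpr ⟨t, ht, hlen, h hZ⟩

theorem trace_union (Z Z' : Set ℕ) (p : List Node) :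
    trace (Z ∪ Z') p = trace Z p ∪ trace Z' p := by
  ext i
  simp only [mem_union, mem_trace, Set.mem_union]
  aesop

theorem trace_empty (p : List Node) : trace ∅ p = ∅ := by
  ext i
  simp [mem_trace]

theorem exists_trace_inter_eq (p : List Node) :
    ∃ N, ∀ Z, trace (Z ∩ {k | k < N}) p = trace Z p := by
  obtain ⟨N, hN⟩ := (p.tails.toFinset.image code).exists_nat_subset_range
  refine ⟨N, fun Z => ?_⟩
  ext i
  simp only [mem_trace, Set.mem_inter_iff]
  refine exists_congr fun t => ⟨fun h => ⟨h.1, h.2.1, h.2.2.1⟩, fun h => ⟨h.1, h.2.1, h.2.2, ?_⟩⟩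
  have ht : t ∈ p.tails.toFinset := List.mem_toFinset.mpr ((List.mem_tails _ _).mpr h.1)
  exact mem_range.mp (hN (mem_image_of_mem code ht))

open Classical in
def pathValue : List Node → Set ℕ → ℝ≥0∞
  | [], _ => 0
  | v :: older, Z =>
    if IsFinsetSubmeasure (eval v) ∧ (v :: older).IsChain Coherent then
      eval v (trace Z (v :: older))
    else 0

theorem isSubmeasure_pathValue (p : List Node) : IsSubmeasure (pathValue p) := by
  rcases p with _ | ⟨v, older⟩
  · exact ⟨rfl, fun _ _ _ => le_rfl, fun _ _ => zero_le⟩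
  simp only [IsSubmeasure, pathValue]
  split_ifs with h
  · refine ⟨by rw [trace_empty, h.1.1], fun Z Z' hZ => h.1.2.1 (trace_mono hZ _),
      fun Z Z' => ?_⟩
    rw [trace_union]
    exact h.1.2.2 _ _
  · exact ⟨rfl, fun _ _ _ => le_rfl, fun _ _ => zero_le⟩

theorem exists_pathValue_inter_eq (p : List Node) :
    ∃ N, ∀ Z, pathValue p (Z ∩ {k | k < N}) = pathValue p Z := by
  obtain ⟨N, hN⟩ := exists_trace_inter_eq p
  refine ⟨N, fun Z => ?_⟩
  rcases p with _ | ⟨v, older⟩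
  · rfl
  simp only [pathValue, hN]

def phiMax (Z : Set ℕ) : ℝ≥0∞ := ⨆ p, pathValue p Z

theorem isSubmeasure_phiMax : IsSubmeasure phiMax :=
  isSubmeasure_iSup isSubmeasure_pathValue

theorem isLSCSubmeasure_phiMax : IsLSCSubmeasure phiMax :=
  isLSCSubmeasure_iSup (fun p _ _ h => (isSubmeasure_pathValue p).2.1 _ _ h)
    fun p Z => (exists_pathValue_inter_eq p).imp fun _ hN => (hN Z).ge

section Embedding

variable {ψ : Set ℕ → ℝ≥0∞}

def embed (ψ : Set ℕ → ℝ≥0∞) (i : ℕ) : ℕ := code (branch ψ (i + 1))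

theorem branch_eq_of_code_eq {t : List Node} {j : ℕ} (h : code t = embed ψ j) :
    t = branch ψ (j + 1) :=
  code_injective h

theorem embed_injective (ψ : Set ℕ → ℝ≥0∞) : Function.Injective (embed ψ) := fun i j h => by
  simpa using congrArg List.length (branch_eq_of_code_eq h)

theorem coe_trace_image_embed_branch (Y : Set ℕ) (n : ℕ) :
    (trace (embed ψ '' Y) (branch ψ n) : Set ℕ) = Y ∩ {k | k < n} := by
  induction n with
  | zero => simp [branch, trace]
  | succ n ih =>
    have hmem : code (branch ψ (n + 1)) ∈ embed ψ '' Y ↔ n ∈ Y :=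
      (embed_injective ψ).mem_set_image
    simp only [branch] at hmem
    simp only [branch, trace, hmem, length_branch]
    split_ifs with h
    · rw [coe_insert, ih]
      ext k
      simp only [Set.mem_insert_iff, Set.mem_inter_iff, Set.mem_ofPred, Nat.lt_succ_iff_lt_or_eq]
      grind
    · rw [ih]
      ext k
      simp only [Set.mem_inter_iff, Set.mem_ofPred, Nat.lt_succ_iff_lt_or_eq]
      grind

theorem mem_trace_image_embed {Y : Set ℕ} {p : List Node} {i : ℕ}
    (hi : i ∈ trace (embed ψ '' Y) p) : i ∈ Y ∧ branch ψ (i + 1) <:+ p := by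
  obtain ⟨t, ht, hlen, j, hj, hcode⟩ := mem_trace.mp hi
  obtain rfl := branch_eq_of_code_eq hcode.symm
  obtain rfl : j = i := by simpa using hlen
  exact ⟨hj, ht⟩

theorem pathValue_branch_succ (hψ : IsSubmeasure ψ) (hfin : ∀ Z, ψ Z ≠ ⊤) (n : ℕ)
    (Z : Set ℕ) : pathValue (branch ψ (n + 1)) Z = eval (dyadicNode ψ (n + 1)) (trace Z (branch ψ (n + 1))) :=
  if_pos ⟨isFinsetSubmeasure_eval_dyadicNode hψ hfin _, isChain_branch hfin (n + 1)⟩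

theorem le_phiMax_image_embed (hψ : IsSubmeasure ψ) (hfin : ∀ Z, ψ Z ≠ ⊤)
    (hl : IsLSCSubmeasure ψ) (Y : Set ℕ) : ψ Y ≤ phiMax (embed ψ '' Y) := by
  refine le_of_tendsto' (hl Y) fun n => ?_
  set A := trace (embed ψ '' Y) (branch ψ (n + 1))
  have hA : (A : Set ℕ) = Y ∩ {k | k < n + 1} := coe_trace_image_embed_branch Y (n + 1)
  have hAn : A ⊆ range (n + 1) := fun k hk => mem_range.mpr (hA ▸ mem_coe.mpr hk).2
  calc ψ (Y ∩ {k | k < n}) ≤ ψ A :=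
        hψ.2.1 _ _ (hA ▸ Set.inter_subset_inter_right _ fun _ hk => Nat.lt_succ_of_lt hk)
    _ ≤ eval (dyadicNode ψ (n + 1)) A := le_eval_dyadicNode hfin hAn
    _ = pathValue (branch ψ (n + 1)) (embed ψ '' Y) := (pathValue_branch_succ hψ hfin n _).symm
    _ ≤ phiMax (embed ψ '' Y) := le_iSup (pathValue · _) _

/-- A path meets the image of `Y` only at depths where it runs along the branch of `ψ`, so
coherence bounds its value by that of its deepest such node. -/
theorem pathValue_image_embed_le (hψ : IsSubmeasure ψ) {n : ℕ} {Y : Set ℕ}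
    (hY : ∀ i ∈ Y, n ≤ i) (p : List Node) : pathValue p (embed ψ '' Y) ≤ ψ Y + 2⁻¹ ^ n := by
  rcases p with _ | ⟨v, older⟩
  · exact zero_le
  simp only [pathValue]
  split_ifs with h
  swap
  · exact zero_le
  set L := trace (embed ψ '' Y) (v :: older)
  rcases L.eq_empty_or_nonempty with hL | hL
  · rw [hL, h.1.1]
    exact zero_le
  set M := L.max' hL
  obtain ⟨hMY, hMp⟩ := mem_trace_image_embed (L.max'_mem hL)
  have hLY : (L : Set ℕ) ⊆ Y := fun i hi => (mem_trace_image_embed hi).1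
  have hLM : L ⊆ range (M + 1) := fun i hi => mem_range_succ_iff.mpr (L.le_max' i hi)
  calc eval v L ≤ eval v L + 2⁻¹ ^ v.1 := le_self_add
    _ ≤ eval (dyadicNode ψ (M + 1)) L + 2⁻¹ ^ (M + 1) := (eval_add_le_of_isSuffix h.2 hMp hLM).2
    _ ≤ ψ L + 2⁻¹ ^ (M + 1) + 2⁻¹ ^ (M + 1) := by
        gcongr
        exact eval_dyadicNode_le hLM
    _ = ψ L + 2⁻¹ ^ M := by rw [add_assoc, inv_two_pow_succ_add_self]
    _ ≤ ψ Y + 2⁻¹ ^ n := add_le_add (hψ.2.1 _ _ hLY)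
        (pow_le_pow_of_le_one zero_le (ENNReal.inv_le_one.mpr one_le_two) (hY M hMY))

theorem phiMax_image_embed_le (hψ : IsSubmeasure ψ) {n : ℕ} {Y : Set ℕ}
    (hY : ∀ i ∈ Y, n ≤ i) : phiMax (embed ψ '' Y) ≤ ψ Y + 2⁻¹ ^ n :=
  iSup_le (pathValue_image_embed_le hψ hY)

theorem image_embed_mem_exh_iff (hψ : IsSubmeasure ψ) (hfin : ∀ Z, ψ Z ≠ ⊤)
    (hl : IsLSCSubmeasure ψ) (X : Set ℕ) : embed ψ '' X ∈ Exh phiMax ↔ X ∈ Exh ψ := by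
  constructor
  · intro hX ε hε
    obtain ⟨F, hF⟩ := hX ε hε
    refine ⟨F.preimage (embed ψ) (embed_injective ψ).injOn, ?_⟩
    have hsub : embed ψ '' (X \ ↑(F.preimage (embed ψ) (embed_injective ψ).injOn)) ⊆
        embed ψ '' X \ ↑F := by
      rintro _ ⟨i, ⟨hiX, hiF⟩, rfl⟩
      exact ⟨⟨i, hiX, rfl⟩, fun h => hiF (mem_preimage.mpr h)⟩
    exact (le_phiMax_image_embed hψ hfin hl _).trans_lt
      ((isSubmeasure_phiMax.2.1 _ _ hsub).trans_lt hF)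
  · intro hX ε hε
    obtain ⟨n, hn⟩ := ENNReal.exists_inv_two_pow_lt (ENNReal.half_pos hε.ne').ne'
    obtain ⟨G, hG⟩ := hX (ε / 2) (ENNReal.half_pos hε.ne')
    refine ⟨(G ∪ range n).image (embed ψ), ?_⟩
    have hY : ∀ i ∈ X \ ↑(G ∪ range n), n ≤ i := fun i hi => by
      simpa using fun h => hi.2 (mem_coe.mpr (mem_union_right _ (mem_range.mpr h)))
    rw [coe_image, ← Set.image_sdiff (embed_injective ψ)]
    calc phiMax (embed ψ '' (X \ ↑(G ∪ range n))) ≤ ψ (X \ ↑(G ∪ range n)) + 2⁻¹ ^ n :=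
          phiMax_image_embed_le hψ hY
      _ ≤ ψ (X \ G) + 2⁻¹ ^ n := by
          gcongr
          exact hψ.2.1 _ _ (Set.sdiff_subset_sdiff_right (by simp))
      _ < ε / 2 + ε / 2 := ENNReal.add_lt_add hG hn
      _ = ε := ENNReal.add_halves ε

end Embedding

end WRKComplete

end

/-- There is a lower semicontinuous submeasure `φ_max` on `P(ℕ)` whose exhaustive
ideal is wRK-above the exhaustive ideal of every lsc submeasure on `P(ℕ)`:
a wRK-complete analytic P-ideal. -/
theorem exists_wRK_complete_analytic_P_ideal :
    ∃ φmax : Set ℕ → ℝ≥0∞, IsSubmeasure φmax ∧ IsLSCSubmeasure φmax ∧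
      ∀ π : Set ℕ → ℝ≥0∞, IsSubmeasure π → IsLSCSubmeasure π →
        wRK (Exh π) (Exh φmax) := by
  refine ⟨WRKComplete.phiMax, WRKComplete.isSubmeasure_phiMax,
    WRKComplete.isLSCSubmeasure_phiMax, fun π hπ hl => ?_⟩
  have hfin (Z : Set ℕ) : min (π Z) 1 ≠ ⊤ := ((min_le_right _ _).trans_lt ENNReal.one_lt_top).ne
  rw [← exh_min_one π]
  exact wRK_of_injective (WRKComplete.embed_injective _) fun X =>
    (WRKComplete.image_embed_mem_exh_iff hπ.min_one hfin hl.min_one X).symm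
end

section
/- For every lower semicontinuous submeasure ψ on P(ℕ) there exists a lower semicontinuous submeasure π on P(ℕ) such that Exh(π) = Exh(ψ) and, for every finite set F ⊆ ℕ, the value π(F) is either a rational number or ∞. -/
open scoped ENNReal

/-! Round `ψ` up to powers of two on finite sets. The rounded function is rational-valued and
lies between `ψ` and `2ψ`, but it is no longer subadditive; replacing it by the cheapest cover
of `F` by subsets of `F` restores subadditivity without leaving the range of finite sums of
powers of two, and the subadditive `ψ` stays below it. Extending by suprema over finite subsets
gives an lsc submeasure `π` with `ψ ≤ π ≤ 2ψ`, hence `Exh π = Exh ψ`. -/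

open Finset

-- The sign condition makes `ENNReal.ofReal` additive on these rationals.
def ratOrTop : AddSubmonoid ℝ≥0∞ where
  carrier := {x | (∃ q : ℚ, 0 ≤ q ∧ x = ENNReal.ofReal q) ∨ x = ⊤}
  zero_mem' := Or.inl ⟨0, le_rfl, by simp⟩
  add_mem' := by
    rintro _ _ (⟨p, hp, rfl⟩ | rfl) (⟨q, hq, rfl⟩ | rfl)
    · refine Or.inl ⟨p + q, add_nonneg hp hq, ?_⟩
      rw [Rat.cast_add, ENNReal.ofReal_add (by exact_mod_cast hp) (by exact_mod_cast hq)]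
    all_goals simp

lemma exists_rat_of_mem_ratOrTop {x : ℝ≥0∞} (hx : x ∈ ratOrTop) :
    (∃ q : ℚ, x = ENNReal.ofReal q) ∨ x = ⊤ :=
  hx.imp_left fun ⟨q, _, hq⟩ => ⟨q, hq⟩

noncomputable def dyadicCeil (x : ℝ≥0∞) : ℝ≥0∞ :=
  if x = 0 then 0 else if x = ⊤ then ⊤ else ENNReal.ofReal (2 ^ Int.clog 2 x.toReal)

lemma dyadicCeil_mem_ratOrTop (x : ℝ≥0∞) : dyadicCeil x ∈ ratOrTop := by
  unfold dyadicCeil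
  split_ifs
  · exact ratOrTop.zero_mem
  · exact Or.inr rfl
  · exact Or.inl ⟨2 ^ Int.clog 2 x.toReal, by positivity, by push_cast; rfl⟩

lemma le_dyadicCeil (x : ℝ≥0∞) : x ≤ dyadicCeil x := by
  unfold dyadicCeil
  split_ifs with h0 htop
  · exact h0.le
  · exact le_top
  · rw [ENNReal.le_ofReal_iff_toReal_le htop (by positivity)]
    exact_mod_cast Int.self_le_zpow_clog one_lt_two x.toReal

lemma dyadicCeil_le_two_mul (x : ℝ≥0∞) : dyadicCeil x ≤ 2 * x := by
  unfold dyadicCeil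
  split_ifs with h0 htop
  · exact zero_le
  · simp [htop]
  · have hlt : (2 : ℝ) ^ (Int.clog 2 x.toReal - 1) < x.toReal := by
      exact_mod_cast Int.zpow_pred_clog_lt_self one_lt_two (ENNReal.toReal_pos h0 htop)
    calc ENNReal.ofReal (2 ^ Int.clog 2 x.toReal)
        = ENNReal.ofReal (2 * 2 ^ (Int.clog 2 x.toReal - 1)) := by
          rw [← zpow_one_add₀ two_ne_zero, add_sub_cancel]
      _ ≤ ENNReal.ofReal (2 * x.toReal) := ENNReal.ofReal_le_ofReal (by linarith)
      _ = 2 * x := by rw [ENNReal.ofReal_mul zero_le_two, ENNReal.ofReal_toReal htop]; simp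

lemma dyadicCeil_mono : Monotone dyadicCeil := by
  intro x y hxy
  rcases eq_or_ne x 0 with rfl | hx0
  · simp [dyadicCeil]
  rcases eq_or_ne y ⊤ with rfl | hytop
  · simp [dyadicCeil]
  have hxtop : x ≠ ⊤ := ne_top_of_le_ne_top hytop hxy
  have hy0 : y ≠ 0 := (pos_of_ne_zero hx0 |>.trans_le hxy).ne'
  simp only [dyadicCeil, if_neg hx0, if_neg hxtop, if_neg hy0, if_neg hytop]
  refine ENNReal.ofReal_le_ofReal (zpow_le_zpow_right₀ one_le_two ?_)
  exact Int.clog_mono_right (ENNReal.toReal_pos hx0 hxtop) (ENNReal.toReal_mono hytop hxy)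

section CoverHull

variable {α : Type*} [DecidableEq α]

def covers (F : Finset α) : Finset (Finset (Finset α)) :=
  F.powerset.powerset.filter fun C => F ⊆ C.sup id

@[simp]
lemma mem_covers {F : Finset α} {C : Finset (Finset α)} :
    C ∈ covers F ↔ (∀ G ∈ C, G ⊆ F) ∧ F ⊆ C.sup id := by
  simp [covers, subset_iff]

lemma singleton_mem_covers (F : Finset α) : {F} ∈ covers F := by
  simp

noncomputable def coverHull (g : Finset α → ℝ≥0∞) (F : Finset α) : ℝ≥0∞ :=
  (covers F).inf fun C => ∑ G ∈ C, g G

variable {g : Finset α → ℝ≥0∞}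

lemma coverHull_le_sum {F : Finset α} {C : Finset (Finset α)} (hC : C ∈ covers F) :
    coverHull g F ≤ ∑ G ∈ C, g G :=
  inf_le hC

lemma exists_coverHull_eq_sum (g : Finset α → ℝ≥0∞) (F : Finset α) :
    ∃ C ∈ covers F, coverHull g F = ∑ G ∈ C, g G :=
  exists_mem_eq_inf _ ⟨{F}, singleton_mem_covers F⟩ _

lemma coverHull_le (F : Finset α) : coverHull g F ≤ g F :=
  (coverHull_le_sum (singleton_mem_covers F)).trans_eq (sum_singleton _ _)

lemma coverHull_empty : coverHull g ∅ = 0 :=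
  nonpos_iff_eq_zero.1 <| (coverHull_le_sum (C := (∅ : Finset (Finset α))) (by simp)).trans_eq (sum_empty)

lemma coverHull_mono (hg : Monotone g) : Monotone (coverHull g) := by
  intro F F' hFF'
  obtain ⟨C, hC, hCeq⟩ := exists_coverHull_eq_sum g F'
  rw [mem_covers] at hC
  have hcover : C.image (· ∩ F) ∈ covers F := by
    refine mem_covers.2 ⟨by simp, fun x hx => ?_⟩
    obtain ⟨G, hG, hxG⟩ := mem_sup.1 (hC.2 (hFF' hx))
    exact mem_sup.2 ⟨G ∩ F, mem_image_of_mem _ hG, mem_inter.2 ⟨hxG, hx⟩⟩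
  calc coverHull g F ≤ ∑ G ∈ C.image (· ∩ F), g G := coverHull_le_sum hcover
    _ ≤ ∑ G ∈ C, g (G ∩ F) := sum_image_le_of_nonneg fun _ _ => zero_le
    _ ≤ ∑ G ∈ C, g G := sum_le_sum fun G _ => hg inter_subset_left
    _ = coverHull g F' := hCeq.symm

lemma coverHull_union_le (F F' : Finset α) :
    coverHull g (F ∪ F') ≤ coverHull g F + coverHull g F' := by
  obtain ⟨C, hC, hCeq⟩ := exists_coverHull_eq_sum g F
  obtain ⟨C', hC', hC'eq⟩ := exists_coverHull_eq_sum g F'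
  rw [mem_covers] at hC hC'
  have hcover : C ∪ C' ∈ covers (F ∪ F') := by
    refine mem_covers.2 ⟨fun G hG => ?_, ?_⟩
    · rcases mem_union.1 hG with hG | hG
      · exact (hC.1 G hG).trans subset_union_left
      · exact (hC'.1 G hG).trans subset_union_right
    · rw [sup_union]
      exact union_subset_union hC.2 hC'.2
  calc coverHull g (F ∪ F') ≤ ∑ G ∈ C ∪ C', g G := coverHull_le_sum hcover
    _ ≤ ∑ G ∈ C, g G + ∑ G ∈ C', g G := by rw [← sum_union_inter]; exact le_self_add
    _ = coverHull g F + coverHull g F' := by rw [hCeq, hC'eq]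

lemma apply_sup_le_sum {φ : Finset α → ℝ≥0∞} (hφ0 : φ ∅ = 0)
    (hφadd : ∀ F F', φ (F ∪ F') ≤ φ F + φ F') (C : Finset (Finset α)) :
    φ (C.sup id) ≤ ∑ G ∈ C, φ G := by
  induction C using cons_induction with
  | empty => simp [hφ0]
  | cons G C hG ih =>
    rw [sup_cons, sum_cons]
    exact (hφadd _ _).trans (add_le_add le_rfl ih)

lemma le_coverHull {φ : Finset α → ℝ≥0∞} (hφ0 : φ ∅ = 0) (hφ : Monotone φ)
    (hφadd : ∀ F F', φ (F ∪ F') ≤ φ F + φ F') (hφg : φ ≤ g) (F : Finset α) :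
    φ F ≤ coverHull g F := by
  obtain ⟨C, hC, hCeq⟩ := exists_coverHull_eq_sum g F
  rw [hCeq]
  exact (hφ (mem_covers.1 hC).2).trans <|
    (apply_sup_le_sum hφ0 hφadd C).trans (sum_le_sum fun G _ => hφg G)

lemma coverHull_mem_of_forall_mem {S : AddSubmonoid ℝ≥0∞} (hg : ∀ G, g G ∈ S) (F : Finset α) :
    coverHull g F ∈ S := by
  obtain ⟨C, -, hCeq⟩ := exists_coverHull_eq_sum g F
  exact hCeq ▸ S.sum_mem fun G _ => hg G

end CoverHull

section FinsetSupExtension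

variable {h : Finset ℕ → ℝ≥0∞}

noncomputable def finsetSupExtension (h : Finset ℕ → ℝ≥0∞) (X : Set ℕ) : ℝ≥0∞ :=
  ⨆ (F : Finset ℕ) (_ : (F : Set ℕ) ⊆ X), h F

lemma finsetSupExtension_mono : Monotone (finsetSupExtension h) :=
  fun _ _ hXY => iSup₂_le fun F hF => le_iSup₂_of_le F (hF.trans hXY) le_rfl

lemma finsetSupExtension_coe (hh : Monotone h) (F : Finset ℕ) :
    finsetSupExtension h F = h F :=
  le_antisymm (iSup₂_le fun _ hG => hh (coe_subset.1 hG)) (le_iSup₂_of_le F subset_rfl le_rfl)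

lemma finsetSupExtension_union_le (hadd : ∀ F F', h (F ∪ F') ≤ h F + h F') (X Y : Set ℕ) :
    finsetSupExtension h (X ∪ Y) ≤ finsetSupExtension h X + finsetSupExtension h Y := by
  classical
  refine iSup₂_le fun F hF => ?_
  have hFX : ((F.filter (· ∈ X) : Finset ℕ) : Set ℕ) ⊆ X := fun x hx => (mem_filter.1 hx).2
  have hFY : ((F.filter (· ∉ X) : Finset ℕ) : Set ℕ) ⊆ Y := fun x hx =>
    (hF (mem_filter.1 hx).1).resolve_left (mem_filter.1 hx).2
  calc h F = h (F.filter (· ∈ X) ∪ F.filter (· ∉ X)) := by rw [filter_union_filter_not_eq]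
    _ ≤ h (F.filter (· ∈ X)) + h (F.filter (· ∉ X)) := hadd _ _
    _ ≤ finsetSupExtension h X + finsetSupExtension h Y :=
      add_le_add (le_iSup₂_of_le _ hFX le_rfl) (le_iSup₂_of_le _ hFY le_rfl)

lemma isSubmeasure_finsetSupExtension (h0 : h ∅ = 0)
    (hadd : ∀ F F', h (F ∪ F') ≤ h F + h F') : IsSubmeasure (finsetSupExtension h) := by
  refine ⟨?_, fun _ _ => (finsetSupExtension_mono ·), finsetSupExtension_union_le hadd⟩
  refine nonpos_iff_eq_zero.1 (iSup₂_le fun F hF => ?_)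
  rw [Set.subset_empty_iff, coe_eq_empty] at hF
  rw [hF, h0]

lemma iSup_finsetSupExtension_inter_lt (X : Set ℕ) :
    ⨆ n, finsetSupExtension h (X ∩ {k | k < n}) = finsetSupExtension h X := by
  refine le_antisymm (iSup_le fun n => finsetSupExtension_mono Set.inter_subset_left) ?_
  refine iSup₂_le fun F hF => le_iSup_of_le (F.sup id + 1) (le_iSup₂_of_le F ?_ le_rfl)
  exact fun x hx => ⟨hF hx, Nat.lt_succ_of_le (le_sup (f := id) hx)⟩

lemma isLSCSubmeasure_finsetSupExtension : IsLSCSubmeasure (finsetSupExtension h) := by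
  intro X
  have hmono : Monotone fun n => finsetSupExtension h (X ∩ {k | k < n}) := fun m n hmn =>
    finsetSupExtension_mono (Set.inter_subset_inter_right X fun k hk => lt_of_lt_of_le hk hmn)
  simpa only [iSup_finsetSupExtension_inter_lt] using tendsto_atTop_iSup hmono

lemma le_finsetSupExtension {ψ : Set ℕ → ℝ≥0∞} (hψ : IsLSCSubmeasure ψ)
    (hψh : ∀ F : Finset ℕ, ψ F ≤ h F) (X : Set ℕ) : ψ X ≤ finsetSupExtension h X := by
  classical
  refine le_of_tendsto' (hψ X) fun n => ?_
  have hfin : X ∩ {k | k < n} = ((range n).filter (· ∈ X) : Finset ℕ) := by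
    ext k
    simp [and_comm]
  rw [hfin]
  exact (hψh _).trans (le_iSup₂_of_le _ (hfin ▸ Set.inter_subset_left) le_rfl)

lemma finsetSupExtension_le_mul {ψ : Set ℕ → ℝ≥0∞} (hψ : Monotone ψ) {c : ℝ≥0∞}
    (hhψ : ∀ F : Finset ℕ, h F ≤ c * ψ F) (X : Set ℕ) : finsetSupExtension h X ≤ c * ψ X :=
  iSup₂_le fun F hF => (hhψ F).trans (mul_le_mul_right (hψ hF) c)

end FinsetSupExtension

lemma exh_subset_exh_of_le_mul {φ ψ : Set ℕ → ℝ≥0∞} {c : ℝ≥0∞} (hc : c ≠ ⊤)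
    (hφψ : ∀ X, φ X ≤ c * ψ X) : Exh ψ ⊆ Exh φ := by
  intro X hX ε hε
  obtain ⟨F, hF⟩ := hX (ε / c) (ENNReal.div_pos hε.ne' hc)
  exact ⟨F, (hφψ _).trans_lt (ENNReal.mul_lt_of_lt_div' hF)⟩

/-- Every lsc submeasure can be replaced by one with the same exhaustive ideal whose
values on finite sets are rational or infinite. -/
theorem exists_rational_valued_lsc_submeasure (ψ : Set ℕ → ℝ≥0∞)
    (hψ : IsSubmeasure ψ) (hlsc : IsLSCSubmeasure ψ) :
    ∃ π : Set ℕ → ℝ≥0∞, IsSubmeasure π ∧ IsLSCSubmeasure π ∧ Exh π = Exh ψ ∧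
      ∀ F : Finset ℕ, (∃ q : ℚ, π (F : Set ℕ) = ENNReal.ofReal (q : ℝ)) ∨
        π (F : Set ℕ) = ⊤ := by
  obtain ⟨hψ0, hψmono, hψadd⟩ := hψ
  set h := coverHull fun G : Finset ℕ => dyadicCeil (ψ G)
  have hmono : Monotone h :=
    coverHull_mono fun _ _ hGG' => dyadicCeil_mono (hψmono _ _ (coe_subset.2 hGG'))
  have hψh : ∀ F : Finset ℕ, ψ F ≤ h F :=
    le_coverHull (φ := fun G : Finset ℕ => ψ G) (by simpa using hψ0)
      (fun _ _ hGG' => hψmono _ _ (coe_subset.2 hGG'))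
      (fun F F' => by simpa only [coe_union] using hψadd F F') (fun G => le_dyadicCeil _)
  have hhψ : ∀ F : Finset ℕ, h F ≤ 2 * ψ F :=
    fun F => (coverHull_le F).trans (dyadicCeil_le_two_mul _)
  refine ⟨finsetSupExtension h, isSubmeasure_finsetSupExtension coverHull_empty coverHull_union_le,
    isLSCSubmeasure_finsetSupExtension, ?_, fun F => ?_⟩
  · refine (exh_subset_exh_of_le_mul ENNReal.one_ne_top fun X => ?_).antisymm
      (exh_subset_exh_of_le_mul ENNReal.ofNat_ne_top
        (finsetSupExtension_le_mul (fun _ _ => hψmono _ _) hhψ))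
    simpa using le_finsetSupExtension hlsc hψh X
  · rw [finsetSupExtension_coe hmono]
    exact exists_rat_of_mem_ratOrTop
      (coverHull_mem_of_forall_mem (fun _ => dyadicCeil_mem_ratOrTop _) F)
end
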